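/- arXiv:1606.04447 — 2 statements merged into one kernel-verified Lean document; each statement's English description precedes it below -/
import Mathlib

section
/- Let G be a well-covered finite simple graph of girth at least five belonging to the class PC, and let B be a basic 5-cycle of G. If x is a vertex of B adjacent (in B) to two vertices of B that have degree two in G, then x ∈ Shed(G). -/
open scoped Classical

variable {V : Type*}

/-- `S` is an independent set of the induced subgraph of `G` on the vertex set `A`. -/
def IsIndepIn (G : SimpleGraph V) (A S : Finset V) : Prop :=
  S ⊆ A ∧ ∀ u ∈ S, ∀ v ∈ S, ¬ G.Adj u v

/-- `S` is a maximal independent set of the induced subgraph of `G` on the vertex set `A`. -/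
def IsMaxIndepIn (G : SimpleGraph V) (A S : Finset V) : Prop :=
  IsIndepIn G A S ∧ ∀ T, IsIndepIn G A T → S ⊆ T → T = S

/-- The induced subgraph of `G` on the vertex set `A` is well-covered: all of its
maximal independent sets have the same cardinality. -/
def WellCoveredOn (G : SimpleGraph V) (A : Finset V) : Prop :=
  ∀ S T, IsMaxIndepIn G A S → IsMaxIndepIn G A T → S.card = T.card

/-- The closed neighbourhood of `x` deleted from `A`: the vertices of `A` distinct from `x`
and not adjacent to `x`. -/
noncomputable def delClosedNbhd (G : SimpleGraph V) (A : Finset V) (x : V) : Finset V :=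
  A.filter fun y => y ≠ x ∧ ¬ G.Adj x y

/-- The induced subgraph of `G` on the vertex set `A` is vertex decomposable: it is
well-covered, and either it has no edges, or some vertex `x ∈ A` is such that deleting `x`,
respectively the closed neighbourhood of `x`, leaves a vertex decomposable graph. -/
def VertexDecomposableOn (G : SimpleGraph V) (A : Finset V) : Prop :=
  WellCoveredOn G A ∧
    ((∀ u ∈ A, ∀ v ∈ A, ¬ G.Adj u v) ∨
      ∃ x, ∃ _h : x ∈ A,
        VertexDecomposableOn G (A.erase x) ∧
        VertexDecomposableOn G (delClosedNbhd G A x))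
termination_by A.card
decreasing_by
  · exact Finset.card_erase_lt_of_mem (by assumption)
  · exact Finset.card_lt_card
      (Finset.filter_ssubset.mpr ⟨x, by assumption, by simp⟩)

/-- A finite simple graph is well-covered if all of its maximal independent sets have the
same cardinality. -/
def WellCovered (G : SimpleGraph V) [Fintype V] : Prop :=
  WellCoveredOn G Finset.univ

/-- A finite simple graph is vertex decomposable. -/
def VertexDecomposable (G : SimpleGraph V) [Fintype V] : Prop :=
  VertexDecomposableOn G Finset.univ

/-- The set of shedding vertices of `G` : those vertices `x` such that both `G \ x` and
`G \ N[x]` are vertex decomposable. -/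
def Shed (G : SimpleGraph V) [Fintype V] : Set V :=
  {x | VertexDecomposableOn G (Finset.univ.erase x) ∧
       VertexDecomposableOn G (delClosedNbhd G Finset.univ x)}

/-- `D` is a dominating set of `G`: every vertex not in `D` is adjacent to a vertex of `D`. -/
def IsDominatingSet (G : SimpleGraph V) (D : Set V) : Prop :=
  ∀ v, v ∉ D → ∃ u ∈ D, G.Adj u v

/-- A vertex is simplicial if its neighbourhood induces a clique. -/
def IsSimplicialVertex (G : SimpleGraph V) (x : V) : Prop :=
  ∀ u v, G.Adj x u → G.Adj x v → u ≠ v → G.Adj u v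

/-- The degree of a vertex `v` in `G`. -/
noncomputable def degIn (G : SimpleGraph V) [Fintype V] (v : V) : ℕ :=
  (Finset.univ.filter fun u => G.Adj v u).card

/-- `b : ZMod 5 → V` parametrizes a basic 5-cycle of `G`: it is an induced 5-cycle
(the vertices are distinct, and two of them are adjacent exactly when they are consecutive),
and no two adjacent vertices of the cycle both have degree three or larger in `G`. -/
def IsBasicFiveCycle (G : SimpleGraph V) [Fintype V] (b : ZMod 5 → V) : Prop :=
  Function.Injective b ∧
  (∀ i j : ZMod 5, G.Adj (b i) (b j) ↔ (j = i + 1 ∨ i = j + 1)) ∧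
  (∀ i : ZMod 5, ¬ (3 ≤ degIn G (b i) ∧ 3 ≤ degIn G (b (i + 1))))

/-- `G` is in the class `PC`: its vertex set is partitioned as `V = P ∪ C`, where `P` is
exactly the set of vertices incident with pendant edges (edges incident to a vertex of
degree one) and the pendant edges form a perfect matching of `P`, and `C` is partitioned
by the vertex sets of basic 5-cycles. -/
def InClassPC (G : SimpleGraph V) [Fintype V] : Prop :=
  ∃ P C : Set V,
    (∀ v, v ∈ P ∨ v ∈ C) ∧ (∀ v, ¬ (v ∈ P ∧ v ∈ C)) ∧
    (∀ v, v ∈ P ↔ ∃ u, G.Adj v u ∧ (degIn G v = 1 ∨ degIn G u = 1)) ∧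
    (∀ v ∈ P, ∃! u, G.Adj v u ∧ (degIn G v = 1 ∨ degIn G u = 1)) ∧
    ∃ 𝒞 : Set (ZMod 5 → V),
      (∀ b ∈ 𝒞, IsBasicFiveCycle G b) ∧
      (∀ v, v ∈ C ↔ ∃ b ∈ 𝒞, v ∈ Set.range b) ∧
      (∀ b ∈ 𝒞, ∀ b' ∈ 𝒞, b ≠ b' → Disjoint (Set.range b) (Set.range b'))

namespace St10

variable {V : Type*}

/-- neighbours of `v` inside `A` -/
noncomputable def nb (G : SimpleGraph V) (A : Finset V) (v : V) : Finset V :=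
  A.filter fun u => G.Adj v u

lemma mem_nb {G : SimpleGraph V} {A : Finset V} {v u : V} :
    u ∈ nb G A v ↔ u ∈ A ∧ G.Adj v u := Finset.mem_filter

noncomputable def dg (G : SimpleGraph V) (A : Finset V) (v : V) : ℕ := (nb G A v).card

/-- girth consequences -/
lemma noC3 {G : SimpleGraph V} (hg : 5 ≤ G.egirth) {a b c : V}
    (hab : G.Adj a b) (hbc : G.Adj b c) (hca : G.Adj c a) : False := by
  classical
  set w : G.Walk a a := .cons hab (.cons hbc (.cons hca .nil)) with hw
  have hcyc : w.IsCycle := by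
    rw [SimpleGraph.Walk.isCycle_def, SimpleGraph.Walk.isTrail_def]
    refine ⟨?_, by simp [hw], ?_⟩ <;>
      simp [hw, Sym2.eq_iff, hab.ne, hab.ne', hbc.ne, hbc.ne', hca.ne, hca.ne']
  have := (SimpleGraph.le_egirth.mp hg) a w hcyc
  have hlen : w.length = 3 := by simp [hw]
  rw [hlen] at this
  norm_num at this

lemma noC4 {G : SimpleGraph V} (hg : 5 ≤ G.egirth) {a b c d : V}
    (hab : G.Adj a b) (hbc : G.Adj b c) (hcd : G.Adj c d) (hda : G.Adj d a)
    (hac : a ≠ c) (hbd : b ≠ d) : False := by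
  classical
  set w : G.Walk a a := .cons hab (.cons hbc (.cons hcd (.cons hda .nil))) with hw
  have hcyc : w.IsCycle := by
    rw [SimpleGraph.Walk.isCycle_def, SimpleGraph.Walk.isTrail_def]
    refine ⟨?_, by simp [hw], ?_⟩ <;>
      simp [hw, Sym2.eq_iff, hab.ne, hab.ne', hbc.ne, hbc.ne', hcd.ne, hcd.ne',
        hda.ne, hda.ne', hac, hac.symm, hbd, hbd.symm]
  have := (SimpleGraph.le_egirth.mp hg) a w hcyc
  have hlen : w.length = 4 := by simp [hw]
  rw [hlen] at this
  norm_num at this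

end St10
namespace St10

variable {V : Type*} {G : SimpleGraph V} {A S T : Finset V} {x u v : V}

lemma nb_empty_of_dg_zero (h : dg G A x = 0) : nb G A x = ∅ := Finset.card_eq_zero.mp h

lemma mem_nb_of (hu : u ∈ A) (ha : G.Adj v u) : u ∈ nb G A v := mem_nb.mpr ⟨hu, ha⟩

lemma dg_pos_of (hu : u ∈ A) (ha : G.Adj v u) : 0 < dg G A v :=
  Finset.card_pos.mpr ⟨u, mem_nb_of hu ha⟩

lemma not_adj_of_dg_zero (h : dg G A x = 0) (hu : u ∈ A) : ¬ G.Adj x u := fun ha => by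
  have := mem_nb_of hu ha
  rw [nb_empty_of_dg_zero h] at this
  exact absurd this (Finset.notMem_empty u)

lemma indep_insert_of (hu : u ∈ A) (hS : IsIndepIn G A S) (h : ∀ w ∈ S, ¬ G.Adj u w) :
    IsIndepIn G A (insert u S) := by
  refine ⟨Finset.insert_subset hu hS.1, ?_⟩
  intro a ha b hb hadj
  rcases Finset.mem_insert.mp ha with ha' | ha'
  · rcases Finset.mem_insert.mp hb with hb' | hb'
    · rw [ha', hb'] at hadj; exact G.loopless.irrefl u hadj
    · rw [ha'] at hadj; exact h b hb' hadj
  · rcases Finset.mem_insert.mp hb with hb' | hb'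
    · rw [hb'] at hadj; exact h a ha' hadj.symm
    · exact hS.2 a ha' b hb' hadj

lemma exists_max_indep (hS : IsIndepIn G A S) : ∃ T, S ⊆ T ∧ IsMaxIndepIn G A T := by
  classical
  set 𝒮 : Finset (Finset V) := A.powerset.filter (fun T => IsIndepIn G A T ∧ S ⊆ T) with h𝒮
  have hmem : ∀ {T}, T ∈ 𝒮 ↔ (IsIndepIn G A T ∧ S ⊆ T) := by
    intro T
    simp only [h𝒮, Finset.mem_filter, Finset.mem_powerset, and_iff_right_iff_imp]
    exact fun h => h.1.1
  have hne : 𝒮.Nonempty := ⟨S, hmem.mpr ⟨hS, le_refl S⟩⟩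
  obtain ⟨T, hT, hmax⟩ := 𝒮.exists_max_image Finset.card hne
  rw [hmem] at hT
  refine ⟨T, hT.2, hT.1, ?_⟩
  intro T' hT' hTT'
  have : T' ∈ 𝒮 := hmem.mpr ⟨hT', hT.2.trans hTT'⟩
  exact (Finset.eq_of_subset_of_card_le hTT' (hmax _ this)).symm

lemma isolated_mem_max (hu : u ∈ A) (hiso : dg G A u = 0) (hS : IsMaxIndepIn G A S) :
    u ∈ S := by
  by_contra h
  have hind : IsIndepIn G A (insert u S) :=
    indep_insert_of hu hS.1 (fun w hw => not_adj_of_dg_zero hiso (hS.1.1 hw))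
  have := hS.2 _ hind (Finset.subset_insert u S)
  exact h (this ▸ Finset.mem_insert_self u S)

lemma mem_del {y : V} : y ∈ delClosedNbhd G A x ↔ y ∈ A ∧ y ≠ x ∧ ¬ G.Adj x y := by
  simp [delClosedNbhd]

lemma del_subset : delClosedNbhd G A x ⊆ A := Finset.filter_subset _ _

lemma maxIndep_del_insert (hx : x ∈ A) (hS : IsMaxIndepIn G (delClosedNbhd G A x) S) :
    IsMaxIndepIn G A (insert x S) ∧ x ∉ S := by
  have hxS : x ∉ S := fun h => (mem_del.mp (hS.1.1 h)).2.1 rfl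
  have hind : IsIndepIn G A (insert x S) := by
    refine indep_insert_of hx ⟨hS.1.1.trans del_subset, hS.1.2⟩ ?_
    exact fun w hw => (mem_del.mp (hS.1.1 hw)).2.2
  refine ⟨⟨hind, ?_⟩, hxS⟩
  intro T hT hsub
  have hxT : x ∈ T := hsub (Finset.mem_insert_self x S)
  have hTdel : T.erase x ⊆ delClosedNbhd G A x := by
    intro w hw
    obtain ⟨hwx, hwT⟩ := Finset.mem_erase.mp hw
    exact mem_del.mpr ⟨hT.1 hwT, hwx, fun h => hT.2 x hxT w hwT h⟩
  have hSsub : S ⊆ T.erase x := fun w hw =>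
    Finset.mem_erase.mpr ⟨fun h => hxS (h ▸ hw), hsub (Finset.mem_insert_of_mem hw)⟩
  have herase : T.erase x = S := by
    refine hS.2 _ ⟨hTdel, ?_⟩ hSsub
    intro a ha b hb
    exact hT.2 a (Finset.mem_of_mem_erase ha) b (Finset.mem_of_mem_erase hb)
  have : T ⊆ insert x S := by
    intro w hw
    by_cases hwx : w = x
    · exact hwx ▸ Finset.mem_insert_self x S
    · exact Finset.mem_insert_of_mem (herase ▸ Finset.mem_erase.mpr ⟨hwx, hw⟩)
  exact Finset.Subset.antisymm this hsub

lemma wc_del (hwc : WellCoveredOn G A) (hx : x ∈ A) :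
    WellCoveredOn G (delClosedNbhd G A x) := by
  intro S T hS hT
  obtain ⟨hS', hxS⟩ := maxIndep_del_insert hx hS
  obtain ⟨hT', hxT⟩ := maxIndep_del_insert hx hT
  have := hwc _ _ hS' hT'
  rw [Finset.card_insert_of_notMem hxS, Finset.card_insert_of_notMem hxT] at this
  omega

lemma wc_erase_aux (h : ∀ S, IsMaxIndepIn G (A.erase x) S → ∃ w ∈ S, G.Adj x w)
    (hwc : WellCoveredOn G A) : WellCoveredOn G (A.erase x) := by
  have key : ∀ S, IsMaxIndepIn G (A.erase x) S → IsMaxIndepIn G A S := by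
    intro S hS
    refine ⟨⟨hS.1.1.trans (Finset.erase_subset _ _), hS.1.2⟩, ?_⟩
    intro T hT hST
    refine hS.2 T ⟨?_, hT.2⟩ hST
    intro w hw
    refine Finset.mem_erase.mpr ⟨?_, hT.1 hw⟩
    rintro rfl
    obtain ⟨w', hw', hadj⟩ := h S hS
    exact hT.2 w hw w' (hST hw') hadj
  intro S T hS hT
  exact hwc _ _ (key _ hS) (key _ hT)

lemma del_eq_erase_of_isolated (hiso : dg G A x = 0) :
    delClosedNbhd G A x = A.erase x := by
  ext y
  rw [mem_del, Finset.mem_erase]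
  constructor
  · rintro ⟨h1, h2, _⟩; exact ⟨h2, h1⟩
  · rintro ⟨h2, h1⟩; exact ⟨h1, h2, fun h => not_adj_of_dg_zero hiso h1 h⟩

end St10
namespace St10

variable {V : Type*} {G : SimpleGraph V} {A : Finset V} {x u v z : V}

/-- pendant edge inside `A` -/
def PE (G : SimpleGraph V) (A : Finset V) (v u : V) : Prop :=
  v ∈ A ∧ u ∈ A ∧ G.Adj v u ∧ (dg G A v = 1 ∨ dg G A u = 1)

def Pnd (G : SimpleGraph V) (A : Finset V) (v : V) : Prop := ∃ u, PE G A v u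

def BasicOn (G : SimpleGraph V) (A : Finset V) (b : ZMod 5 → V) : Prop :=
  (∀ j, b j ∈ A) ∧ Function.Injective b ∧
  (∀ i j : ZMod 5, G.Adj (b i) (b j) ↔ (j = i + 1 ∨ i = j + 1)) ∧
  (∀ j : ZMod 5, ¬ (3 ≤ dg G A (b j) ∧ 3 ≤ dg G A (b (j + 1))))

def Fam (G : SimpleGraph V) (A : Finset V) (𝒞 : Set (ZMod 5 → V)) : Prop :=
  (∀ b ∈ 𝒞, BasicOn G A b) ∧
  (∀ b ∈ 𝒞, ∀ b' ∈ 𝒞, b ≠ b' → Disjoint (Set.range b) (Set.range b')) ∧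
  (∀ v ∈ A, ((∃ b ∈ 𝒞, v ∈ Set.range b) ↔ (¬ Pnd G A v ∧ 0 < dg G A v)))

def PCI (G : SimpleGraph V) (A : Finset V) : Prop :=
  (∀ v u₁ u₂, PE G A v u₁ → PE G A v u₂ → u₁ = u₂) ∧ ∃ 𝒞, Fam G A 𝒞

lemma PE.symm {u : V} (h : PE G A v u) : PE G A u v :=
  ⟨h.2.1, h.1, h.2.2.1.symm, h.2.2.2.symm⟩

lemma zm5 : ∀ p q : ZMod 5, p ≠ q → p = q + 1 ∨ p = q + 2 ∨ p = q + 3 ∨ p = q + 4 := by decide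

lemma zm5ne₁ : ∀ j : ZMod 5, j + 1 ≠ j - 1 := by decide

lemma BasicOn.adj_succ (hB : BasicOn G A b) (j : ZMod 5) : G.Adj (b j) (b (j + 1)) :=
  (hB.2.2.1 j (j + 1)).mpr (Or.inl rfl)

lemma BasicOn.adj_pred (hB : BasicOn G A b) (j : ZMod 5) : G.Adj (b j) (b (j - 1)) :=
  (hB.2.2.1 j (j - 1)).mpr (Or.inr (by ring))

lemma BasicOn.nbne (hB : BasicOn G A b) {p q : ZMod 5} (h : p ≠ q) : b p ≠ b q :=
  fun he => h (hB.2.1 he)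

lemma BasicOn.dg_two_le (hB : BasicOn G A b) (j : ZMod 5) : 2 ≤ dg G A (b j) := by
  have h1 : b (j + 1) ∈ nb G A (b j) := mem_nb_of (hB.1 _) (hB.adj_succ j)
  have h2 : b (j - 1) ∈ nb G A (b j) := mem_nb_of (hB.1 _) (hB.adj_pred j)
  have hne : b (j + 1) ≠ b (j - 1) := hB.nbne (zm5ne₁ j)
  calc 2 = ({b (j + 1), b (j - 1)} : Finset V).card := by
            rw [Finset.card_insert_of_notMem (by simpa using hne), Finset.card_singleton]
       _ ≤ _ := Finset.card_le_card (by
            intro w hw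
            rcases Finset.mem_insert.mp hw with h | h
            · exact h ▸ h1
            · exact (Finset.mem_singleton.mp h) ▸ h2)

lemma nb_singleton_of_dg_one (h : dg G A u = 1) (hv : v ∈ A) (ha : G.Adj u v) :
    nb G A u = {v} := by
  obtain ⟨w, hw⟩ := Finset.card_eq_one.mp h
  have := mem_nb_of hv ha
  rw [hw] at this ⊢
  rw [Finset.mem_singleton.mp this]

lemma BasicOn.nb_eq_pair (hB : BasicOn G A b) {j : ZMod 5} (h : dg G A (b j) = 2) :
    nb G A (b j) = {b (j + 1), b (j - 1)} := by
  have hsub : ({b (j + 1), b (j - 1)} : Finset V) ⊆ nb G A (b j) := by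
    intro w hw
    rcases Finset.mem_insert.mp hw with h' | h'
    · exact h' ▸ mem_nb_of (hB.1 _) (hB.adj_succ j)
    · exact (Finset.mem_singleton.mp h') ▸ mem_nb_of (hB.1 _) (hB.adj_pred j)
  have hp2 : ({b (j + 1), b (j - 1)} : Finset V).card = 2 := by
    rw [Finset.card_insert_of_notMem (by simpa using hB.nbne (zm5ne₁ j)),
      Finset.card_singleton]
  refine (Finset.eq_of_subset_of_card_le hsub ?_).symm
  rw [hp2]
  exact le_of_eq h

lemma Fam.cyc_eq_of_mem {𝒞 : Set (ZMod 5 → V)} (hF : Fam G A 𝒞) {b b' : ZMod 5 → V}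
    (hb : b ∈ 𝒞) (hb' : b' ∈ 𝒞) {w : V} (h1 : w ∈ Set.range b) (h2 : w ∈ Set.range b') :
    b = b' := by
  by_contra hne
  exact Set.disjoint_left.mp (hF.2.1 b hb b' hb' hne) h1 h2

lemma Fam.not_pnd {𝒞 : Set (ZMod 5 → V)} (hF : Fam G A 𝒞) {b : ZMod 5 → V}
    (hb : b ∈ 𝒞) (j : ZMod 5) : ¬ Pnd G A (b j) :=
  (((hF.2.2 _ ((hF.1 b hb).1 j)).mp ⟨b, hb, ⟨j, rfl⟩⟩)).1

lemma eq_of_common_nb (hg : 5 ≤ G.egirth) {r₁ r₂ : V} (hxz : x ≠ z)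
    (h1 : G.Adj x r₁) (h2 : G.Adj z r₁) (h3 : G.Adj x r₂) (h4 : G.Adj z r₂) : r₁ = r₂ := by
  by_contra hne
  exact noC4 hg h1 h2.symm h4 h3.symm hxz hne

lemma nb_del_subset : nb G (delClosedNbhd G A x) z ⊆ nb G A z := fun w hw =>
  mem_nb.mpr ⟨del_subset (mem_nb.mp hw).1, (mem_nb.mp hw).2⟩

lemma mem_nb_del {w : V} :
    w ∈ nb G (delClosedNbhd G A x) z ↔ (w ∈ nb G A z ∧ w ≠ x ∧ ¬ G.Adj x w) := by
  rw [mem_nb, mem_nb, mem_del]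
  tauto

lemma dg_del_le : dg G (delClosedNbhd G A x) z ≤ dg G A z :=
  Finset.card_le_card nb_del_subset

lemma lost_adj (hz : z ∈ delClosedNbhd G A x) {r : V} (hr : r ∈ nb G A z)
    (hr' : r ∉ nb G (delClosedNbhd G A x) z) : G.Adj x r := by
  rw [mem_nb_del] at hr'
  push_neg at hr'
  by_cases hrx : r = x
  · subst hrx
    exact absurd (mem_nb.mp hr).2.symm (mem_del.mp hz).2.2
  · exact hr' hr hrx

end St10
namespace St10

variable {V : Type*} {G : SimpleGraph V} {A : Finset V} {x u v z : V}
  {𝒞 : Set (ZMod 5 → V)} {b : ZMod 5 → V}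

/-- classification of leaves of `G - N[x]` -/
lemma leaf_classify (hg : 5 ≤ G.egirth) (hF : Fam G A 𝒞) (hx : x ∈ A)
    (hz : z ∈ delClosedNbhd G A x) (h1 : dg G (delClosedNbhd G A x) z = 1) :
    (dg G A z = 1 ∧ nb G (delClosedNbhd G A x) z = nb G A z) ∨
    (∃ z'', PE G A z z'' ∧ dg G A z'' = 1 ∧ 2 ≤ dg G A z ∧
      nb G (delClosedNbhd G A x) z = {z''}) ∨
    (∃ b ∈ 𝒞, ∃ j ε : ZMod 5, (ε = 1 ∨ ε = -1) ∧ z = b j ∧ dg G A z = 2 ∧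
      G.Adj x (b (j + ε)) ∧ nb G (delClosedNbhd G A x) z = {b (j - ε)}) := by
  have hzA : z ∈ A := del_subset hz
  have hzx : z ≠ x := (mem_del.mp hz).2.1
  have hsub : nb G (delClosedNbhd G A x) z ⊆ nb G A z := nb_del_subset
  have hlost : (nb G A z \ nb G (delClosedNbhd G A x) z).card ≤ 1 := by
    by_contra hc
    push_neg at hc
    obtain ⟨r₁, hr₁, r₂, hr₂, hne⟩ := Finset.one_lt_card.mp hc
    obtain ⟨hr₁n, hr₁d⟩ := Finset.mem_sdiff.mp hr₁
    obtain ⟨hr₂n, hr₂d⟩ := Finset.mem_sdiff.mp hr₂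
    exact hne (eq_of_common_nb hg (Ne.symm hzx) (lost_adj hz hr₁n hr₁d)
      (mem_nb.mp hr₁n).2 (lost_adj hz hr₂n hr₂d) (mem_nb.mp hr₂n).2)
  have hcards := Finset.card_sdiff_add_card_eq_card hsub
  have hdgz : dg G A z = 1 ∨ dg G A z = 2 := by
    have : dg G (delClosedNbhd G A x) z ≤ dg G A z := dg_del_le
    unfold dg at *
    omega
  rcases hdgz with hdgz | hdgz
  · left
    refine ⟨hdgz, ?_⟩
    refine Finset.Subset.antisymm hsub ?_
    have hempty : nb G A z \ nb G (delClosedNbhd G A x) z = ∅ := by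
      apply Finset.card_eq_zero.mp
      unfold dg at *
      omega
    intro w hw
    by_contra hw'
    have : w ∈ nb G A z \ nb G (delClosedNbhd G A x) z := Finset.mem_sdiff.mpr ⟨hw, hw'⟩
    rw [hempty] at this
    exact absurd this (Finset.notMem_empty w)
  · -- dg G A z = 2
    have hlost1 : (nb G A z \ nb G (delClosedNbhd G A x) z).card = 1 := by
      unfold dg at *
      omega
    obtain ⟨r, hr⟩ := Finset.card_eq_one.mp hlost1
    have hrmem : r ∈ nb G A z ∧ r ∉ nb G (delClosedNbhd G A x) z := by
      have : r ∈ nb G A z \ nb G (delClosedNbhd G A x) z := hr ▸ Finset.mem_singleton_self r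
      exact Finset.mem_sdiff.mp this
    have hxr : G.Adj x r := lost_adj hz hrmem.1 hrmem.2
    obtain ⟨w, hw⟩ := Finset.card_eq_one.mp h1
    have hwmem : w ∈ nb G (delClosedNbhd G A x) z := hw ▸ Finset.mem_singleton_self w
    have hwnb : w ∈ nb G A z := hsub hwmem
    have hwr : w ≠ r := fun h => hrmem.2 (h ▸ hwmem)
    have hpair : nb G A z = {r, w} := by
      have hsub2 : ({r, w} : Finset V) ⊆ nb G A z := by
        intro a ha
        rcases Finset.mem_insert.mp ha with h' | h'
        · exact h' ▸ hrmem.1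
        · exact (Finset.mem_singleton.mp h') ▸ hwnb
      have hp2 : ({r, w} : Finset V).card = 2 := by
        rw [Finset.card_insert_of_notMem (by simpa using (Ne.symm hwr)), Finset.card_singleton]
      refine (Finset.eq_of_subset_of_card_le hsub2 ?_).symm
      rw [hp2]
      exact le_of_eq hdgz
    by_cases hpnd : Pnd G A z
    · obtain ⟨s, hPE⟩ := hpnd
      have hds : dg G A s = 1 := by
        rcases hPE.2.2.2 with h' | h'
        · rw [hdgz] at h'; exact absurd h' (by norm_num)
        · exact h'
      have hs : s ∈ nb G A z := mem_nb_of hPE.2.1 hPE.2.2.1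
      rw [hpair] at hs
      rcases Finset.mem_insert.mp hs with hsr | hsw
      · exfalso
        subst hsr
        have hnbs : nb G A s = {x} := nb_singleton_of_dg_one hds hx hxr.symm
        have : z ∈ nb G A s := mem_nb_of hzA hPE.2.2.1.symm
        rw [hnbs] at this
        exact hzx (Finset.mem_singleton.mp this)
      · right; left
        rw [Finset.mem_singleton.mp hsw] at hPE hds
        exact ⟨w, hPE, hds, by omega, hw⟩
    · have hcov := (hF.2.2 z hzA).mpr ⟨hpnd, by omega⟩
      obtain ⟨b, hb, j, hj⟩ := hcov
      have hB := hF.1 b hb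
      have hnbz : nb G A z = {b (j + 1), b (j - 1)} := by
        rw [← hj] at hdgz ⊢
        exact hB.nb_eq_pair hdgz
      have hrp : r = b (j + 1) ∨ r = b (j - 1) := by
        have : r ∈ ({b (j + 1), b (j - 1)} : Finset V) := hnbz ▸ hrmem.1
        rcases Finset.mem_insert.mp this with h' | h'
        · exact Or.inl h'
        · exact Or.inr (Finset.mem_singleton.mp h')
      have hwp : w = b (j + 1) ∨ w = b (j - 1) := by
        have : w ∈ ({b (j + 1), b (j - 1)} : Finset V) := hnbz ▸ hwnb
        rcases Finset.mem_insert.mp this with h' | h'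
        · exact Or.inl h'
        · exact Or.inr (Finset.mem_singleton.mp h')
      right; right
      rcases hrp with hrp | hrp
      · have hwp' : w = b (j - 1) := by
          rcases hwp with h' | h'
          · exact absurd (h'.trans hrp.symm) hwr
          · exact h'
        exact ⟨b, hb, j, 1, Or.inl rfl, hj.symm, hdgz, hrp ▸ hxr, by rw [hw, hwp']⟩
      · have hwp' : w = b (j + 1) := by
          rcases hwp with h' | h'
          · exact h'
          · exact absurd (h'.trans hrp.symm) hwr
        refine ⟨b, hb, j, -1, Or.inr rfl, hj.symm, hdgz, ?_, ?_⟩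
        · rw [show j + -1 = j - 1 by ring]; exact hrp ▸ hxr
        · rw [show j - -1 = j + 1 by ring, hw, hwp']

end St10
namespace St10

variable {V : Type*} {G : SimpleGraph V} {A : Finset V} {x u v z y : V}
  {𝒞 : Set (ZMod 5 → V)} {b : ZMod 5 → V}

lemma zmA : ∀ a c : ZMod 5, a - 1 = c - 1 → a = c := by decide
lemma zmB : ∀ a c : ZMod 5, a + 1 = c + 1 → a = c := by decide
lemma zmC : ∀ a c : ZMod 5, a - 1 = c - -1 → c + -1 = (a + 1) + 1 := by decide

lemma cyc_cyc_contra (hg : 5 ≤ G.egirth) (hB : BasicOn G A b) {j₁ j₂ ε₁ ε₂ : ZMod 5}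
    (hε₁ : ε₁ = 1 ∨ ε₁ = -1) (hε₂ : ε₂ = 1 ∨ ε₂ = -1)
    (hy : j₁ - ε₁ = j₂ - ε₂) (hzz : j₁ ≠ j₂)
    (ha₁ : G.Adj x (b (j₁ + ε₁))) (ha₂ : G.Adj x (b (j₂ + ε₂))) : False := by
  have hiff := hB.2.2.1
  rcases hε₁ with rfl | rfl <;> rcases hε₂ with rfl | rfl
  · exact hzz (zmA _ _ (by simpa [sub_eq_add_neg] using hy))
  · have hkey : j₂ + -1 = (j₁ + 1) + 1 := zmC _ _ (by simpa [sub_eq_add_neg] using hy)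
    have hadj : G.Adj (b (j₁ + 1)) (b (j₂ + -1)) := (hiff _ _).mpr (Or.inl hkey)
    exact noC3 hg ha₁ hadj ha₂.symm
  · have hkey : j₁ + -1 = (j₂ + 1) + 1 := zmC _ _ (by simpa [sub_eq_add_neg] using hy.symm)
    have hadj : G.Adj (b (j₂ + 1)) (b (j₁ + -1)) := (hiff _ _).mpr (Or.inl hkey)
    exact noC3 hg ha₂ hadj ha₁.symm
  · refine hzz ?_
    have : j₁ + 1 = j₂ + 1 := by simpa [sub_eq_add_neg] using hy
    exact zmB _ _ this

lemma two_le_dg_of_ne {z₁ z₂ : V} (h1 : z₁ ∈ nb G A y) (h2 : z₂ ∈ nb G A y)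
    (hne : z₁ ≠ z₂) : 2 ≤ dg G A y :=
  Finset.one_lt_card.mpr ⟨z₁, h1, z₂, h2, hne⟩

lemma pnd_del_uniq (hg : 5 ≤ G.egirth)
    (hU : ∀ v u₁ u₂, PE G A v u₁ → PE G A v u₂ → u₁ = u₂)
    (hF : Fam G A 𝒞) (hx : x ∈ A) :
    ∀ y z₁ z₂, PE G (delClosedNbhd G A x) y z₁ → PE G (delClosedNbhd G A x) y z₂ →
      z₁ = z₂ := by
  intro y z₁ z₂ h1 h2
  by_contra hne
  have hy2 : 2 ≤ dg G (delClosedNbhd G A x) y :=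
    two_le_dg_of_ne (mem_nb_of h1.2.1 h1.2.2.1) (mem_nb_of h2.2.1 h2.2.2.1) hne
  have hyA2 : 2 ≤ dg G A y := le_trans hy2 dg_del_le
  have hyA : y ∈ A := del_subset h1.1
  -- each zₖ is a leaf of the deleted graph
  have tag : ∀ z, PE G (delClosedNbhd G A x) y z → PE G A y z ∨
      (∃ b ∈ 𝒞, ∃ j ε : ZMod 5, (ε = 1 ∨ ε = -1) ∧ z = b j ∧
        G.Adj x (b (j + ε)) ∧ y = b (j - ε)) := by
    intro z hz
    have hdz : dg G (delClosedNbhd G A x) z = 1 := by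
      rcases hz.2.2.2 with h' | h'
      · omega
      · exact h'
    have hynb : y ∈ nb G (delClosedNbhd G A x) z := mem_nb_of hz.1 hz.2.2.1.symm
    rcases leaf_classify hg hF hx hz.2.1 hdz with ⟨ha, _⟩ | ⟨z'', hPE, hdz'', _, hnb⟩ |
      ⟨b, hb, j, ε, hε, hzj, _, hadj, hnb⟩
    · exact Or.inl ⟨hyA, del_subset hz.2.1, hz.2.2.1, Or.inr ha⟩
    · exfalso
      rw [hnb] at hynb
      rw [Finset.mem_singleton.mp hynb] at hyA2
      omega
    · right
      rw [hnb] at hynb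
      exact ⟨b, hb, j, ε, hε, hzj, hadj, Finset.mem_singleton.mp hynb⟩
  rcases tag z₁ h1 with t1 | ⟨b₁, hb₁, j₁, ε₁, hε₁, hz₁, hadj₁, hy₁⟩
  · rcases tag z₂ h2 with t2 | ⟨b₂, hb₂, j₂, ε₂, hε₂, hz₂, hadj₂, hy₂⟩
    · exact hne (hU y z₁ z₂ t1 t2)
    · exact hF.not_pnd hb₂ (j₂ - ε₂) (hy₂ ▸ ⟨z₁, t1⟩)
  · rcases tag z₂ h2 with t2 | ⟨b₂, hb₂, j₂, ε₂, hε₂, hz₂, hadj₂, hy₂⟩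
    · exact hF.not_pnd hb₁ (j₁ - ε₁) (hy₁ ▸ ⟨z₂, t2⟩)
    · have hbb : b₁ = b₂ :=
        hF.cyc_eq_of_mem hb₁ hb₂ ⟨j₁ - ε₁, hy₁.symm⟩ ⟨j₂ - ε₂, hy₂.symm⟩
      subst hbb
      have hjj : j₁ - ε₁ = j₂ - ε₂ := (hF.1 b₁ hb₁).2.1 (hy₁ ▸ hy₂)
      have hjne : j₁ ≠ j₂ := by
        intro h
        exact hne (hz₁.trans (h ▸ hz₂.symm))
      exact cyc_cyc_contra hg (hF.1 b₁ hb₁) hε₁ hε₂ hjj hjne hadj₁ hadj₂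
  
lemma mem_del_of {w : V} (hA : w ∈ A) (h1 : w ≠ x) (h2 : ¬ G.Adj x w) :
    w ∈ delClosedNbhd G A x := mem_del.mpr ⟨hA, h1, h2⟩

/-- a degree-2 cycle vertex losing one cycle-neighbour becomes a pendant vertex -/
lemma pe_of_deg2_lost (hB : BasicOn G A b) {m δ : ZMod 5} (hδ : δ = 1 ∨ δ = -1)
    (hd2 : dg G A (b m) = 2) (hm : b m ∈ delClosedNbhd G A x)
    (hout : b (m + δ) ∉ delClosedNbhd G A x) (hin : b (m - δ) ∈ delClosedNbhd G A x) :
    PE G (delClosedNbhd G A x) (b m) (b (m - δ)) := by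
  have hpair := hB.nb_eq_pair hd2
  have hnb : nb G (delClosedNbhd G A x) (b m) = {b (m - δ)} := by
    refine Finset.Subset.antisymm ?_ ?_
    · intro w hw
      have hw' : w ∈ nb G A (b m) := nb_del_subset hw
      rw [hpair] at hw'
      have hwA : w ∈ delClosedNbhd G A x := (mem_nb.mp hw).1
      rcases hε : hδ with rfl | rfl
      · rcases Finset.mem_insert.mp hw' with h' | h'
        · exact absurd (h' ▸ hwA) hout
        · exact Finset.mem_singleton.mpr (Finset.mem_singleton.mp h')
      · rcases Finset.mem_insert.mp hw' with h' | h'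
        · rw [show m - -1 = m + 1 by ring]
          exact Finset.mem_singleton.mpr h'
        · rw [show m + -1 = m - 1 by ring] at hout
          exact absurd ((Finset.mem_singleton.mp h') ▸ hwA) hout
    · intro w hw
      rw [Finset.mem_singleton.mp hw]
      refine mem_nb_of hin ?_
      rcases hδ with rfl | rfl
      · exact hB.adj_pred m
      · rw [show m - -1 = m + 1 by ring]
        exact hB.adj_succ m
  refine ⟨hm, hin, ?_, Or.inl ?_⟩
  · rcases hδ with rfl | rfl
    · exact hB.adj_pred m
    · rw [show m - -1 = m + 1 by ring]
      exact hB.adj_succ m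
  · rw [dg, hnb, Finset.card_singleton]

end St10
namespace St10

variable {V : Type*} {G : SimpleGraph V} {A : Finset V} {x u v z y : V}
  {𝒞 : Set (ZMod 5 → V)} {b : ZMod 5 → V}

lemma zmD : ∀ k : ZMod 5, ¬ (k + 2 = k + 1 ∨ k = k + 2 + 1) := by decide
lemma zmE : ∀ k : ZMod 5, ¬ (k + 3 = k + 1 ∨ k = k + 3 + 1) := by decide
lemma zmF : ∀ k : ZMod 5, k + 4 = k - 1 := by decide
lemma zmH : ∀ q : ZMod 5, q - 1 - 1 = q + 3 := by decide
lemma zmK2 : ∀ k : ZMod 5, k + 2 ≠ k := by decide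
lemma zmK3 : ∀ k : ZMod 5, k + 3 ≠ k := by decide
lemma zmG : ∀ k : ZMod 5, k + 3 + 1 = k - 1 := by decide
lemma zmS : ∀ q : ZMod 5, q ≠ q - 2 := by decide
lemma zmQ2 : ∀ q : ZMod 5, q ≠ q + 2 := by decide

lemma fam_del (hg : 5 ≤ G.egirth) (hF : Fam G A 𝒞) (hx : x ∈ A) :
    Fam G (delClosedNbhd G A x) {b | b ∈ 𝒞 ∧ ∀ j, b j ∈ delClosedNbhd G A x} := by
  refine ⟨?_, ?_, ?_⟩
  · rintro b ⟨hb, hmem⟩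
    have hB := hF.1 b hb
    refine ⟨hmem, hB.2.1, hB.2.2.1, ?_⟩
    rintro j ⟨h3a, h3b⟩
    exact hB.2.2.2 j ⟨le_trans h3a dg_del_le, le_trans h3b dg_del_le⟩
  · rintro b ⟨hb, _⟩ b' ⟨hb', _⟩ hne
    exact hF.2.1 b hb b' hb' hne
  · intro v hv
    constructor
    · rintro ⟨b, ⟨hb, hbmem⟩, j, hj⟩
      subst hj
      have hB := hF.1 b hb
      have hv' : b j ∈ delClosedNbhd G A x := hbmem j
      constructor
      · rintro ⟨z, hPEz⟩
        have h2le : 2 ≤ dg G (delClosedNbhd G A x) (b j) :=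
          two_le_dg_of_ne (mem_nb_of (hbmem (j+1)) (hB.adj_succ j))
            (mem_nb_of (hbmem (j-1)) (hB.adj_pred j)) (hB.nbne (zm5ne₁ j))
        have hdz : dg G (delClosedNbhd G A x) z = 1 := by
          rcases hPEz.2.2.2 with h | h
          · omega
          · exact h
        have hvnb : b j ∈ nb G (delClosedNbhd G A x) z := mem_nb_of hv' hPEz.2.2.1.symm
        rcases leaf_classify hg hF hx hPEz.2.1 hdz with ⟨ha, _⟩ |
          ⟨z'', _, hdz'', _, hnb⟩ | ⟨b₂, hb₂, j₂, ε, hε, hzj, _, hadj, hnb⟩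
        · exact hF.not_pnd hb j ⟨z, hB.1 j, del_subset hPEz.2.1, hPEz.2.2.1, Or.inr ha⟩
        · rw [hnb] at hvnb
          have h1 := Finset.mem_singleton.mp hvnb
          have h2 : 2 ≤ dg G A (b j) := le_trans h2le dg_del_le
          rw [h1] at h2
          omega
        · rw [hnb] at hvnb
          have hveq := Finset.mem_singleton.mp hvnb
          have hbeq : b = b₂ := hF.cyc_eq_of_mem hb hb₂ ⟨j, rfl⟩ ⟨j₂ - ε, hveq.symm⟩
          subst hbeq
          exact (mem_del.mp (hbmem (j₂ + ε))).2.2 hadj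
      · exact Finset.card_pos.mpr ⟨b (j+1), mem_nb_of (hbmem (j+1)) (hB.adj_succ j)⟩
    · rintro ⟨hnp, hdpos⟩
      have hvA : v ∈ A := del_subset hv
      have hvx : v ≠ x := (mem_del.mp hv).2.1
      have hvnadj : ¬ G.Adj x v := (mem_del.mp hv).2.2
      by_cases hpnd : Pnd G A v
      · exfalso
        obtain ⟨s, hPE⟩ := hpnd
        by_cases hdv : dg G A v = 1
        · have hnbv : nb G A v = {s} := nb_singleton_of_dg_one hdv hPE.2.1 hPE.2.2.1
          have hsub : nb G (delClosedNbhd G A x) v ⊆ {s} := hnbv ▸ nb_del_subset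
          have hnbv'' : nb G (delClosedNbhd G A x) v = {s} := by
            rcases Finset.subset_singleton_iff.mp hsub with h | h
            · exfalso
              have : dg G (delClosedNbhd G A x) v = 0 := by rw [dg, h, Finset.card_empty]
              omega
            · exact h
          have hs'' : s ∈ delClosedNbhd G A x := by
            have : s ∈ nb G (delClosedNbhd G A x) v := hnbv'' ▸ Finset.mem_singleton_self s
            exact (mem_nb.mp this).1
          exact hnp ⟨s, hv, hs'', hPE.2.2.1,
            Or.inl (by rw [dg, hnbv'', Finset.card_singleton])⟩
        · have hds : dg G A s = 1 := by
            rcases hPE.2.2.2 with h | h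
            · exact absurd h hdv
            · exact h
          have hnbs : nb G A s = {v} := nb_singleton_of_dg_one hds hvA hPE.2.2.1.symm
          have hsx : s ≠ x := by
            rintro rfl
            exact hvnadj hPE.2.2.1.symm
          have hsnadj : ¬ G.Adj x s := by
            intro h
            have hxm : x ∈ nb G A s := mem_nb_of hx h.symm
            rw [hnbs] at hxm
            exact hvx (Finset.mem_singleton.mp hxm).symm
          have hs'' : s ∈ delClosedNbhd G A x := mem_del_of hPE.2.1 hsx hsnadj
          have hvmem : v ∈ nb G (delClosedNbhd G A x) s := mem_nb_of hv hPE.2.2.1.symm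
          have hnbs'' : nb G (delClosedNbhd G A x) s = {v} :=
            Finset.Subset.antisymm (hnbs ▸ nb_del_subset) (Finset.singleton_subset_iff.mpr hvmem)
          exact hnp ⟨s, hv, hs'', hPE.2.2.1,
            Or.inr (by rw [dg, hnbs'', Finset.card_singleton])⟩
      · have hcov := (hF.2.2 v hvA).mpr ⟨hpnd, lt_of_lt_of_le hdpos dg_del_le⟩
        obtain ⟨b1, hb1, p, hp⟩ := hcov
        have hB1 := hF.1 b1 hb1
        by_cases hall : ∀ j, b1 j ∈ delClosedNbhd G A x
        · exact ⟨b1, ⟨hb1, hall⟩, p, hp⟩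
        exfalso
        push_neg at hall
        obtain ⟨q, hq⟩ := hall
        by_cases hxr : ∃ k, b1 k = x
        · -- x lies on the cycle b1
          obtain ⟨k, hk⟩ := hxr
          have hc1out : b1 (k+1) ∉ delClosedNbhd G A x := fun h =>
            (mem_del.mp h).2.2 (hk ▸ hB1.adj_succ k)
          have hc4out : b1 (k-1) ∉ delClosedNbhd G A x := fun h =>
            (mem_del.mp h).2.2 (hk ▸ hB1.adj_pred k)
          have hc2in : b1 (k+2) ∈ delClosedNbhd G A x := by
            refine mem_del_of (hB1.1 _) (hk ▸ hB1.nbne (zmK2 k)) ?_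
            rw [← hk]
            intro h
            exact zmD k ((hB1.2.2.1 k (k+2)).mp h)
          have hc3in : b1 (k+3) ∈ delClosedNbhd G A x := by
            refine mem_del_of (hB1.1 _) (hk ▸ hB1.nbne (zmK3 k)) ?_
            rw [← hk]
            intro h
            exact zmE k ((hB1.2.2.1 k (k+3)).mp h)
          have hpk : p = k+2 ∨ p = k+3 := by
            have hpne : p ≠ k := by
              intro h
              rw [h, hk] at hp
              exact hvx hp.symm
            rcases zm5 p k hpne with h | h | h | h
            · rw [h] at hp; exact absurd (hp ▸ hv) hc1out
            · exact Or.inl h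
            · exact Or.inr h
            · rw [h, zmF] at hp; exact absurd (hp ▸ hv) hc4out
          have hdg23 := hB1.2.2.2 (k+2)
          rw [show k+2+1 = k+3 by ring] at hdg23
          have h2le2 := hB1.dg_two_le (k+2)
          have h2le3 := hB1.dg_two_le (k+3)
          have hd2 : dg G A (b1 (k+2)) = 2 ∨ dg G A (b1 (k+3)) = 2 := by omega
          have hPE23 : PE G (delClosedNbhd G A x) (b1 (k+2)) (b1 (k+3)) ∨
              PE G (delClosedNbhd G A x) (b1 (k+3)) (b1 (k+2)) := by
            rcases hd2 with h | h
            · left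
              have := pe_of_deg2_lost (x := x) hB1 (Or.inr rfl) h hc2in
                (by rw [show k+2+-1 = k+1 by ring]; exact hc1out)
                (by rw [show k+2- -1 = k+3 by ring]; exact hc3in)
              rwa [show k+2- -1 = k+3 by ring] at this
            · right
              have := pe_of_deg2_lost (x := x) hB1 (Or.inl rfl) h hc3in
                (by rw [zmG]; exact hc4out)
                (by rw [show k+3-1 = k+2 by ring]; exact hc2in)
              rwa [show k+3-1 = k+2 by ring] at this
          rcases hpk with h | h <;> rw [h] at hp
          · rcases hPE23 with hPE' | hPE'
            · exact hnp ⟨_, hp ▸ hPE'⟩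
            · exact hnp ⟨_, hp ▸ hPE'.symm⟩
          · rcases hPE23 with hPE' | hPE'
            · exact hnp ⟨_, hp ▸ hPE'.symm⟩
            · exact hnp ⟨_, hp ▸ hPE'⟩
        · -- x is not on the cycle b1
          push_neg at hxr
          have hqA : b1 q ∈ A := hB1.1 q
          have hadjq : G.Adj x (b1 q) := by
            rw [mem_del] at hq
            push_neg at hq
            exact hq hqA (hxr q)
          have hqout : b1 q ∉ delClosedNbhd G A x := fun h => (mem_del.mp h).2.2 hadjq
          have h3q : 3 ≤ dg G A (b1 q) := by
            have hsub : ({x, b1 (q+1), b1 (q-1)} : Finset V) ⊆ nb G A (b1 q) := by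
              intro w hw
              rcases Finset.mem_insert.mp hw with h' | h'
              · exact h' ▸ mem_nb_of hx hadjq.symm
              · rcases Finset.mem_insert.mp h' with h'' | h''
                · exact h'' ▸ mem_nb_of (hB1.1 _) (hB1.adj_succ q)
                · exact (Finset.mem_singleton.mp h'') ▸ mem_nb_of (hB1.1 _) (hB1.adj_pred q)
            have hc3 : ({x, b1 (q+1), b1 (q-1)} : Finset V).card = 3 := by
              rw [Finset.card_insert_of_notMem, Finset.card_insert_of_notMem,
                Finset.card_singleton]
              · simpa using hB1.nbne (zm5ne₁ q)
              · simp only [Finset.mem_insert, Finset.mem_singleton]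
                push_neg
                exact ⟨Ne.symm (hxr (q+1)), Ne.symm (hxr (q-1))⟩
            calc 3 = ({x, b1 (q+1), b1 (q-1)} : Finset V).card := hc3.symm
              _ ≤ _ := Finset.card_le_card hsub
          have hd2q1 : dg G A (b1 (q+1)) = 2 := by
            have h1 := hB1.2.2.2 q
            have h2 := hB1.dg_two_le (q+1)
            omega
          have hd2q4 : dg G A (b1 (q-1)) = 2 := by
            have h1 := hB1.2.2.2 (q-1)
            rw [show q-1+1 = q by ring] at h1
            have h2 := hB1.dg_two_le (q-1)
            omega
          have hpq : p ≠ q := by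
            intro h
            rw [h] at hp
            exact hqout (hp ▸ hv)
          rcases zm5 p q hpq with h | h | h | h <;> rw [h] at hp
          · -- v = b1 (q+1)
            have hin : b1 (q+2) ∈ delClosedNbhd G A x := by
              refine mem_del_of (hB1.1 _) (hxr _) ?_
              intro hadj2
              have hadj12 : G.Adj (b1 (q+1)) (b1 (q+2)) := by
                have := hB1.adj_succ (q+1)
                rwa [show q+1+1 = q+2 by ring] at this
              have := eq_of_common_nb hg (Ne.symm (hxr (q+1))) hadjq (hB1.adj_succ q).symm
                hadj2 hadj12
              exact hB1.nbne (by exact fun hc => zmQ2 q hc) this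
            have hPEv := pe_of_deg2_lost (x := x) hB1 (Or.inr rfl) hd2q1
              (by rw [hp]; exact hv)
              (by rw [show q+1+-1 = q by ring]; exact hqout)
              (by rw [show q+1- -1 = q+2 by ring]; exact hin)
            exact hnp ⟨_, hp ▸ hPEv⟩
          · -- v = b1 (q+2); the vertex b1 (q+1) becomes a leaf
            have hsin : b1 (q+1) ∈ delClosedNbhd G A x := by
              refine mem_del_of (hB1.1 _) (hxr _) ?_
              intro hadj1
              exact noC3 hg hadjq (hB1.adj_succ q) hadj1.symm
            have hPEs := pe_of_deg2_lost (x := x) hB1 (Or.inr rfl) hd2q1 hsin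
              (by rw [show q+1+-1 = q by ring]; exact hqout)
              (by rw [show q+1- -1 = q+2 by ring, hp]; exact hv)
            rw [show q+1- -1 = q+2 by ring] at hPEs
            exact hnp ⟨_, hp ▸ hPEs.symm⟩
          · -- v = b1 (q+3); the vertex b1 (q-1) becomes a leaf
            have hsin : b1 (q-1) ∈ delClosedNbhd G A x := by
              refine mem_del_of (hB1.1 _) (hxr _) ?_
              intro hadj1
              exact noC3 hg hadjq (hB1.adj_pred q) hadj1.symm
            have hPEs := pe_of_deg2_lost (x := x) hB1 (Or.inl rfl) hd2q4 hsin
              (by rw [show q-1+1 = q by ring]; exact hqout)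
              (by rw [zmH, hp]; exact hv)
            rw [zmH] at hPEs
            exact hnp ⟨_, hp ▸ hPEs.symm⟩
          · -- v = b1 (q+4) = b1 (q-1)
            rw [zmF] at hp
            have hin : b1 (q-2) ∈ delClosedNbhd G A x := by
              refine mem_del_of (hB1.1 _) (hxr _) ?_
              intro hadj2
              have hadj12 : G.Adj (b1 (q-1)) (b1 (q-2)) := by
                have := hB1.adj_pred (q-1)
                rwa [show q-1-1 = q-2 by ring] at this
              have := eq_of_common_nb hg (Ne.symm (hxr (q-1))) hadjq (hB1.adj_pred q).symm
                hadj2 hadj12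
              exact hB1.nbne (zmS q) this
            have hPEv := pe_of_deg2_lost (x := x) hB1 (Or.inl rfl) hd2q4
              (by rw [hp]; exact hv)
              (by rw [show q-1+1 = q by ring]; exact hqout)
              (by rw [show q-1-1 = q-2 by ring]; exact hin)
            exact hnp ⟨_, hp ▸ hPEv⟩

lemma pci_del (hg : 5 ≤ G.egirth) (hP : PCI G A) (hx : x ∈ A) :
    PCI G (delClosedNbhd G A x) := by
  obtain ⟨hU, 𝒞, hF⟩ := hP
  exact ⟨pnd_del_uniq hg hU hF hx, _, fam_del hg hF hx⟩

end St10
namespace St10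

variable {V : Type*} {G : SimpleGraph V} {A : Finset V} {x u v z y : V}
  {𝒞 : Set (ZMod 5 → V)} {b : ZMod 5 → V}

lemma nb_erase {z : V} : nb G (A.erase x) z = (nb G A z).erase x := by
  ext w
  simp only [mem_nb, Finset.mem_erase]
  tauto

lemma dg_erase_le {z : V} : dg G (A.erase x) z ≤ dg G A z := by
  rw [dg, dg, nb_erase]
  exact Finset.card_le_card (Finset.erase_subset _ _)

lemma zmUU : ∀ a c e f : ZMod 5, a - c = e - f → a + c = e + f → a = e := by decide

/-- erase version of `pe_of_deg2_lost` -/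
lemma pe_of_deg2_erase (hB : BasicOn G A b) {m δ : ZMod 5} (hδ : δ = 1 ∨ δ = -1)
    (hd2 : dg G A (b m) = 2) (hout : b (m + δ) = x) (hmne : b m ≠ x)
    (hinne : b (m - δ) ≠ x) :
    PE G (A.erase x) (b m) (b (m - δ)) := by
  have hpair := hB.nb_eq_pair hd2
  have hadj : G.Adj (b m) (b (m - δ)) := by
    rcases hδ with rfl | rfl
    · exact hB.adj_pred m
    · rw [show m - -1 = m + 1 by ring]
      exact hB.adj_succ m
  have hnb : nb G (A.erase x) (b m) = {b (m - δ)} := by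
    rw [nb_erase, hpair]
    refine Finset.Subset.antisymm ?_ ?_
    · intro w hw
      obtain ⟨hwx, hw'⟩ := Finset.mem_erase.mp hw
      rcases hδ with rfl | rfl
      · rcases Finset.mem_insert.mp hw' with h' | h'
        · exact absurd (h'.trans hout) hwx
        · exact h'
      · rcases Finset.mem_insert.mp hw' with h' | h'
        · rw [show m - -1 = m + 1 by ring]
          exact Finset.mem_singleton.mpr h'
        · rw [show m + -1 = m - 1 by ring] at hout
          exact absurd ((Finset.mem_singleton.mp h').trans hout) hwx
    · intro w hw
      rw [Finset.mem_singleton.mp hw]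
      refine Finset.mem_erase.mpr ⟨hinne, ?_⟩
      rcases hδ with rfl | rfl
      · exact Finset.mem_insert_of_mem (Finset.mem_singleton_self _)
      · rw [show m - -1 = m + 1 by ring]
        exact Finset.mem_insert_self _ _
  refine ⟨Finset.mem_erase.mpr ⟨hmne, hB.1 m⟩, Finset.mem_erase.mpr ⟨hinne, hB.1 _⟩,
    hadj, Or.inl ?_⟩
  rw [dg, hnb, Finset.card_singleton]

/-- the admissible erasures -/
def EraseOK (G : SimpleGraph V) (A : Finset V) (𝒞 : Set (ZMod 5 → V)) (x : V) : Prop :=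
  (∃ u, PE G A x u ∧ dg G A u = 1) ∨
  (∃ b ∈ 𝒞, ∃ k : ZMod 5, b k = x ∧ dg G A (b (k+1)) = 2 ∧ dg G A (b (k-1)) = 2)

lemma EraseOK.dgx (hF : Fam G A 𝒞) (h : EraseOK G A 𝒞 x) (hdg : dg G A x = 1) :
    ∀ w, G.Adj x w → w ∈ A → dg G A w = 1 := by
  intro w hw hwA
  rcases h with ⟨u, hPE, hdu⟩ | ⟨b, hb, k, hk, _, _⟩
  · have hnbx : nb G A x = {w} := nb_singleton_of_dg_one hdg hwA hw
    have : u ∈ nb G A x := mem_nb_of hPE.2.1 hPE.2.2.1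
    rw [hnbx] at this
    rw [← Finset.mem_singleton.mp this]
    exact hdu
  · exfalso
    have := (hF.1 b hb).dg_two_le k
    rw [hk] at this
    omega

/-- classification of leaves of `G - x` for admissible `x` -/
lemma leaf_classify_erase (hF : Fam G A 𝒞) (hok : EraseOK G A 𝒞 x)
    (hz : z ∈ A.erase x) (h1 : dg G (A.erase x) z = 1) :
    (dg G A z = 1 ∧ ∃ s, nb G A z = {s} ∧ nb G (A.erase x) z = {s}) ∨
    (∃ z'', PE G A z z'' ∧ dg G A z'' = 1 ∧ 2 ≤ dg G A z ∧ nb G (A.erase x) z = {z''}) ∨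
    (∃ b ∈ 𝒞, ∃ j ε : ZMod 5, (ε = 1 ∨ ε = -1) ∧ z = b j ∧ dg G A z = 2 ∧
      x = b (j + ε) ∧ nb G (A.erase x) z = {b (j - ε)}) := by
  have hzA : z ∈ A := Finset.mem_of_mem_erase hz
  have hzx : z ≠ x := (Finset.mem_erase.mp hz).1
  by_cases hxm : x ∈ nb G A z
  · -- z was adjacent to x
    have hdg2 : dg G A z = 2 := by
      have : dg G (A.erase x) z = dg G A z - 1 := by
        rw [dg, dg, nb_erase, Finset.card_erase_of_mem hxm]
      omega
    obtain ⟨w, hw⟩ := Finset.card_eq_one.mp (show dg G (A.erase x) z = 1 from h1)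
    have hwnb : w ∈ (nb G A z).erase x := by
      rw [← nb_erase]
      exact hw ▸ Finset.mem_singleton_self w
    have hwx : w ≠ x := (Finset.mem_erase.mp hwnb).1
    have hwnbA : w ∈ nb G A z := Finset.mem_of_mem_erase hwnb
    have hpair : nb G A z = {x, w} := by
      have hsub2 : ({x, w} : Finset V) ⊆ nb G A z := by
        intro a ha
        rcases Finset.mem_insert.mp ha with h' | h'
        · exact h' ▸ hxm
        · exact (Finset.mem_singleton.mp h') ▸ hwnbA
      have hp2 : ({x, w} : Finset V).card = 2 := by
        rw [Finset.card_insert_of_notMem (by simpa using (Ne.symm hwx)), Finset.card_singleton]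
      refine (Finset.eq_of_subset_of_card_le hsub2 ?_).symm
      rw [hp2]
      exact le_of_eq hdg2
    have hadjzx : G.Adj z x := (mem_nb.mp hxm).2
    by_cases hpnd : Pnd G A z
    · obtain ⟨s, hPE⟩ := hpnd
      have hds : dg G A s = 1 := by
        rcases hPE.2.2.2 with h' | h'
        · rw [hdg2] at h'; exact absurd h' (by norm_num)
        · exact h'
      have hs : s ∈ nb G A z := mem_nb_of hPE.2.1 hPE.2.2.1
      rw [hpair] at hs
      rcases Finset.mem_insert.mp hs with hsx | hsw
      · exfalso
        subst hsx
        have := hok.dgx hF hds z hadjzx.symm hzA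
        omega
      · right; left
        rw [Finset.mem_singleton.mp hsw] at hPE hds
        exact ⟨w, hPE, hds, by omega, hw⟩
    · have hcov := (hF.2.2 z hzA).mpr ⟨hpnd, by omega⟩
      obtain ⟨b, hb, j, hj⟩ := hcov
      have hB := hF.1 b hb
      have hnbz : nb G A z = {b (j + 1), b (j - 1)} := by
        rw [← hj] at hdg2 ⊢
        exact hB.nb_eq_pair hdg2
      rw [hnbz] at hpair
      have hxp : x ∈ ({b (j + 1), b (j - 1)} : Finset V) := by
        rw [← hnbz]; exact hxm
      right; right
      rcases Finset.mem_insert.mp hxp with hx1 | hx1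
      · refine ⟨b, hb, j, 1, Or.inl rfl, hj.symm, hdg2, hx1, ?_⟩
        rw [nb_erase, hnbz, hx1,
          Finset.erase_insert (by simpa using hB.nbne (zm5ne₁ j))]
      · have hx1' := Finset.mem_singleton.mp hx1
        refine ⟨b, hb, j, -1, Or.inr rfl, hj.symm, hdg2, ?_, ?_⟩
        · rw [show j + -1 = j - 1 by ring]; exact hx1'
        · rw [show j - -1 = j + 1 by ring, nb_erase, hnbz, Finset.pair_comm, hx1',
            Finset.erase_insert (by simpa using (hB.nbne (zm5ne₁ j)).symm)]
  · -- z was not adjacent to x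
    left
    have hnb : nb G (A.erase x) z = nb G A z := by
      rw [nb_erase, Finset.erase_eq_of_notMem hxm]
    have hdg : dg G A z = 1 := by
      rw [dg, ← hnb]
      exact h1
    obtain ⟨s, hs⟩ := Finset.card_eq_one.mp hdg
    exact ⟨hdg, s, hs, by rw [hnb]; exact hs⟩

end St10
namespace St10

variable {V : Type*} {G : SimpleGraph V} {A : Finset V} {x u v z y : V}
  {𝒞 : Set (ZMod 5 → V)} {b : ZMod 5 → V}

lemma zmP1 : ∀ k : ZMod 5, k + 1 ≠ k := by decide
lemma zmP4 : ∀ k : ZMod 5, k - 1 ≠ k := by decide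
lemma zmS2 : ∀ k : ZMod 5, k - 2 ≠ k := by decide

lemma pnd_erase_uniq (hU : ∀ v u₁ u₂, PE G A v u₁ → PE G A v u₂ → u₁ = u₂)
    (hF : Fam G A 𝒞) (hok : EraseOK G A 𝒞 x) :
    ∀ y z₁ z₂, PE G (A.erase x) y z₁ → PE G (A.erase x) y z₂ → z₁ = z₂ := by
  intro y z₁ z₂ h1 h2
  by_contra hne
  have hy2 : 2 ≤ dg G (A.erase x) y :=
    two_le_dg_of_ne (mem_nb_of h1.2.1 h1.2.2.1) (mem_nb_of h2.2.1 h2.2.2.1) hne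
  have hyA2 : 2 ≤ dg G A y := le_trans hy2 dg_erase_le
  have hyA : y ∈ A := Finset.mem_of_mem_erase h1.1
  have tag : ∀ z, PE G (A.erase x) y z → PE G A y z ∨
      (∃ b ∈ 𝒞, ∃ j ε : ZMod 5, (ε = 1 ∨ ε = -1) ∧ z = b j ∧
        x = b (j + ε) ∧ y = b (j - ε)) := by
    intro z hz
    have hdz : dg G (A.erase x) z = 1 := by
      rcases hz.2.2.2 with h' | h'
      · omega
      · exact h'
    have hynb : y ∈ nb G (A.erase x) z := mem_nb_of hz.1 hz.2.2.1.symm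
    rcases leaf_classify_erase hF hok hz.2.1 hdz with ⟨ha, s, _, hnb⟩ |
      ⟨z'', _, hdz'', _, hnb⟩ | ⟨b, hb, j, ε, hε, hzj, _, hxe, hnb⟩
    · exact Or.inl ⟨hyA, Finset.mem_of_mem_erase hz.2.1, hz.2.2.1, Or.inr ha⟩
    · exfalso
      rw [hnb] at hynb
      rw [Finset.mem_singleton.mp hynb] at hyA2
      omega
    · right
      rw [hnb] at hynb
      exact ⟨b, hb, j, ε, hε, hzj, hxe, Finset.mem_singleton.mp hynb⟩
  rcases tag z₁ h1 with t1 | ⟨b₁, hb₁, j₁, ε₁, hε₁, hz₁, hx₁, hy₁⟩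
  · rcases tag z₂ h2 with t2 | ⟨b₂, hb₂, j₂, ε₂, hε₂, hz₂, hx₂, hy₂⟩
    · exact hne (hU y z₁ z₂ t1 t2)
    · exact hF.not_pnd hb₂ (j₂ - ε₂) (hy₂ ▸ ⟨z₁, t1⟩)
  · rcases tag z₂ h2 with t2 | ⟨b₂, hb₂, j₂, ε₂, hε₂, hz₂, hx₂, hy₂⟩
    · exact hF.not_pnd hb₁ (j₁ - ε₁) (hy₁ ▸ ⟨z₂, t2⟩)
    · have hbb : b₁ = b₂ :=
        hF.cyc_eq_of_mem hb₁ hb₂ ⟨j₁ - ε₁, hy₁.symm⟩ ⟨j₂ - ε₂, hy₂.symm⟩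
      subst hbb
      have hjj : j₁ - ε₁ = j₂ - ε₂ := (hF.1 b₁ hb₁).2.1 (hy₁ ▸ hy₂)
      have hjj2 : j₁ + ε₁ = j₂ + ε₂ := (hF.1 b₁ hb₁).2.1 (hx₁ ▸ hx₂)
      exact hne (hz₁.trans ((zmUU _ _ _ _ hjj hjj2) ▸ hz₂.symm))

lemma fam_erase (hF : Fam G A 𝒞) (hok : EraseOK G A 𝒞 x) :
    Fam G (A.erase x) {b | b ∈ 𝒞 ∧ ∀ j, b j ≠ x} := by
  refine ⟨?_, ?_, ?_⟩
  · rintro b ⟨hb, hmem⟩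
    have hB := hF.1 b hb
    refine ⟨fun j => Finset.mem_erase.mpr ⟨hmem j, hB.1 j⟩, hB.2.1, hB.2.2.1, ?_⟩
    rintro j ⟨h3a, h3b⟩
    exact hB.2.2.2 j ⟨le_trans h3a dg_erase_le, le_trans h3b dg_erase_le⟩
  · rintro b ⟨hb, _⟩ b' ⟨hb', _⟩ hne
    exact hF.2.1 b hb b' hb' hne
  · intro v hv
    constructor
    · rintro ⟨b, ⟨hb, hbne⟩, j, hj⟩
      subst hj
      have hB := hF.1 b hb
      have hmem : ∀ i, b i ∈ A.erase x := fun i => Finset.mem_erase.mpr ⟨hbne i, hB.1 i⟩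
      constructor
      · rintro ⟨z, hPEz⟩
        have h2le : 2 ≤ dg G (A.erase x) (b j) :=
          two_le_dg_of_ne (mem_nb_of (hmem (j+1)) (hB.adj_succ j))
            (mem_nb_of (hmem (j-1)) (hB.adj_pred j)) (hB.nbne (zm5ne₁ j))
        have hdz : dg G (A.erase x) z = 1 := by
          rcases hPEz.2.2.2 with h | h
          · omega
          · exact h
        have hvnb : b j ∈ nb G (A.erase x) z := mem_nb_of (hmem j) hPEz.2.2.1.symm
        rcases leaf_classify_erase hF hok hPEz.2.1 hdz with ⟨ha, s, _, hnb⟩ |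
          ⟨z'', _, hdz'', _, hnb⟩ | ⟨b₂, hb₂, j₂, ε, hε, hzj, _, hxe, hnb⟩
        · exact hF.not_pnd hb j
            ⟨z, hB.1 j, Finset.mem_of_mem_erase hPEz.2.1, hPEz.2.2.1, Or.inr ha⟩
        · rw [hnb] at hvnb
          have h1 := Finset.mem_singleton.mp hvnb
          have h2 : 2 ≤ dg G A (b j) := le_trans h2le dg_erase_le
          rw [h1] at h2
          omega
        · rw [hnb] at hvnb
          have hveq := Finset.mem_singleton.mp hvnb
          have hbeq : b = b₂ := hF.cyc_eq_of_mem hb hb₂ ⟨j, rfl⟩ ⟨j₂ - ε, hveq.symm⟩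
          subst hbeq
          exact hbne (j₂ + ε) hxe.symm
      · exact Finset.card_pos.mpr ⟨b (j+1), mem_nb_of (hmem (j+1)) (hB.adj_succ j)⟩
    · rintro ⟨hnp, hdpos⟩
      have hvA : v ∈ A := Finset.mem_of_mem_erase hv
      have hvx : v ≠ x := (Finset.mem_erase.mp hv).1
      by_cases hpnd : Pnd G A v
      · exfalso
        obtain ⟨s, hPE⟩ := hpnd
        by_cases hdv : dg G A v = 1
        · have hnbv : nb G A v = {s} := nb_singleton_of_dg_one hdv hPE.2.1 hPE.2.2.1
          have hsx : s ≠ x := by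
            intro h
            have : nb G (A.erase x) v = ∅ := by
              rw [nb_erase, hnbv, h, Finset.erase_singleton]
            rw [dg, this, Finset.card_empty] at hdpos
            omega
          have hnbv' : nb G (A.erase x) v = {s} := by
            rw [nb_erase, hnbv, Finset.erase_eq_of_notMem (by simpa using Ne.symm hsx)]
          exact hnp ⟨s, hv, Finset.mem_erase.mpr ⟨hsx, hPE.2.1⟩, hPE.2.2.1,
            Or.inl (by rw [dg, hnbv', Finset.card_singleton])⟩
        · have hds : dg G A s = 1 := by
            rcases hPE.2.2.2 with h | h
            · exact absurd h hdv
            · exact h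
          have hsx : s ≠ x := by
            intro h
            have hadjxv : G.Adj x v := by rw [← h]; exact hPE.2.2.1.symm
            rw [h] at hds
            exact hdv (hok.dgx hF hds v hadjxv hvA)
          have hnbs : nb G A s = {v} := nb_singleton_of_dg_one hds hvA hPE.2.2.1.symm
          have hnbs' : nb G (A.erase x) s = {v} := by
            rw [nb_erase, hnbs, Finset.erase_eq_of_notMem (by simpa using Ne.symm hvx)]
          exact hnp ⟨s, hv, Finset.mem_erase.mpr ⟨hsx, hPE.2.1⟩, hPE.2.2.1,
            Or.inr (by rw [dg, hnbs', Finset.card_singleton])⟩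
      · have hcov := (hF.2.2 v hvA).mpr ⟨hpnd, lt_of_lt_of_le hdpos dg_erase_le⟩
        obtain ⟨b1, hb1, p, hp⟩ := hcov
        have hB1 := hF.1 b1 hb1
        by_cases hall : ∀ j, b1 j ≠ x
        · exact ⟨b1, ⟨hb1, hall⟩, p, hp⟩
        exfalso
        push_neg at hall
        obtain ⟨k, hk⟩ := hall
        rcases hok with ⟨u, hPEx, _⟩ | ⟨b, hb, k', hk', hd1, hd4⟩
        · exact hF.not_pnd hb1 k ⟨u, hk ▸ hPEx⟩
        · have hbeq : b = b1 := hF.cyc_eq_of_mem hb hb1 ⟨k', hk'⟩ ⟨k, hk⟩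
          subst hbeq
          have hkk : k' = k := hB1.2.1 (hk'.trans hk.symm)
          rw [hkk] at hd1 hd4
          have hPEa : PE G (A.erase x) (b (k+1)) (b (k+2)) := by
            have := pe_of_deg2_erase (x := x) hB1 (Or.inr rfl) hd1
              (by rw [show k+1+-1 = k by ring]; exact hk)
              (by rw [← hk]; exact hB1.nbne (zmP1 k))
              (by rw [show k+1- -1 = k+2 by ring, ← hk]; exact hB1.nbne (zmK2 k))
            rwa [show k+1- -1 = k+2 by ring] at this
          have hPEb : PE G (A.erase x) (b (k-1)) (b (k+3)) := by
            have := pe_of_deg2_erase (x := x) hB1 (Or.inl rfl) hd4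
              (by rw [show k-1+1 = k by ring]; exact hk)
              (by rw [← hk]; exact hB1.nbne (zmP4 k))
              (by rw [show k-1-1 = k-2 by ring, ← hk]; exact hB1.nbne (zmS2 k))
            rwa [zmH] at this
          have hpk : p ≠ k := by
            intro h
            rw [h, hk] at hp
            exact hvx hp.symm
          rcases zm5 p k hpk with h | h | h | h <;> rw [h] at hp
          · exact hnp ⟨_, hp ▸ hPEa⟩
          · exact hnp ⟨_, hp ▸ hPEa.symm⟩
          · exact hnp ⟨_, hp ▸ hPEb.symm⟩
          · rw [zmF] at hp
            exact hnp ⟨_, hp ▸ hPEb⟩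

lemma pci_erase (hP : PCI G A) {𝒞 : Set (ZMod 5 → V)} (hF : Fam G A 𝒞)
    (hok : EraseOK G A 𝒞 x) : PCI G (A.erase x) :=
  ⟨pnd_erase_uniq hP.1 hF hok, _, fam_erase hF hok⟩

end St10
namespace St10

variable {V : Type*} {G : SimpleGraph V} {A : Finset V} {x u v z y : V}
  {𝒞 : Set (ZMod 5 → V)} {b : ZMod 5 → V}

lemma zmChoice : ∀ f : ZMod 5 → Bool, (∀ j, ¬ (f j = true ∧ f (j+1) = true)) →
    ∃ k, f (k+1) = false ∧ f (k-1) = false := by decide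

lemma cycle_choice (hB : BasicOn G A b) :
    ∃ k, dg G A (b (k+1)) = 2 ∧ dg G A (b (k-1)) = 2 := by
  classical
  obtain ⟨k, hk1, hk4⟩ := zmChoice (fun j => decide (3 ≤ dg G A (b j)))
    (fun j ⟨h1, h2⟩ => hB.2.2.2 j ⟨of_decide_eq_true h1, of_decide_eq_true h2⟩)
  refine ⟨k, ?_, ?_⟩
  · have h1 : ¬ (3 ≤ dg G A (b (k+1))) := of_decide_eq_false hk1
    have h2 := hB.dg_two_le (k+1)
    omega
  · have h1 : ¬ (3 ≤ dg G A (b (k-1))) := of_decide_eq_false hk4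
    have h2 := hB.dg_two_le (k-1)
    omega

lemma del_subset_erase : delClosedNbhd G A x ⊆ A.erase x := fun w hw =>
  Finset.mem_erase.mpr ⟨(mem_del.mp hw).2.1, (mem_del.mp hw).1⟩

lemma wc_erase_supp (hwc : WellCoveredOn G A) {p q : V} (hPE : PE G A p q)
    (hdq : dg G A q = 1) : WellCoveredOn G (A.erase p) := by
  refine wc_erase_aux (fun S hS => ?_) hwc
  have hq' : q ∈ A.erase p := Finset.mem_erase.mpr ⟨hPE.2.2.1.ne', hPE.2.1⟩
  have hnbq : nb G A q = {p} := nb_singleton_of_dg_one hdq hPE.1 hPE.2.2.1.symm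
  have hdq0 : dg G (A.erase p) q = 0 := by
    rw [dg, nb_erase, hnbq, Finset.erase_singleton, Finset.card_empty]
  exact ⟨q, isolated_mem_max hq' hdq0 hS, hPE.2.2.1⟩

lemma zm22 : ∀ k : ZMod 5, k - 2 = (k + 2) + 1 := by decide

lemma wc_erase_cyc (hwc : WellCoveredOn G A) (hB : BasicOn G A b) {k : ZMod 5}
    (hk1 : dg G A (b (k+1)) = 2) (hk4 : dg G A (b (k-1)) = 2) :
    WellCoveredOn G (A.erase (b k)) := by
  refine wc_erase_aux (fun S hS => ?_) hwc
  by_contra hno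
  push_neg at hno
  have hSsub : S ⊆ A := hS.1.1.trans (Finset.erase_subset _ _)
  have step : ∀ m : ZMod 5, dg G A (b m) = 2 → G.Adj (b k) (b m) →
      ∃ w ∈ S, (w = b (m + 1) ∨ w = b (m - 1)) ∧ w ≠ b k := by
    intro m hd2 hmadj
    have hmS : b m ∉ S := fun h => hno _ h hmadj
    have hmA' : b m ∈ A.erase (b k) := Finset.mem_erase.mpr ⟨hmadj.ne', hB.1 m⟩
    have hex : ∃ w ∈ S, G.Adj (b m) w := by
      by_contra hnn
      push_neg at hnn
      have hind := indep_insert_of hmA' hS.1 hnn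
      have := hS.2 _ hind (Finset.subset_insert _ S)
      exact hmS (this ▸ Finset.mem_insert_self _ S)
    obtain ⟨w, hwS, hadjw⟩ := hex
    have hwnb : w ∈ nb G A (b m) := mem_nb_of (hSsub hwS) hadjw
    rw [hB.nb_eq_pair hd2] at hwnb
    have hwk : w ≠ b k := (Finset.mem_erase.mp (hS.1.1 hwS)).1
    rcases Finset.mem_insert.mp hwnb with h' | h'
    · exact ⟨w, hwS, Or.inl h', hwk⟩
    · exact ⟨w, hwS, Or.inr (Finset.mem_singleton.mp h'), hwk⟩
  obtain ⟨w₁, hw₁S, hw₁, hw₁k⟩ := step (k+1) hk1 (hB.adj_succ k)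
  have h1 : b (k + 2) ∈ S := by
    rcases hw₁ with h' | h'
    · rw [show k+1+1 = k+2 by ring] at h'
      exact h' ▸ hw₁S
    · rw [show k+1-1 = k by ring] at h'
      exact absurd h' hw₁k
  obtain ⟨w₂, hw₂S, hw₂, hw₂k⟩ := step (k-1) hk4 (hB.adj_pred k)
  have h2 : b (k - 2) ∈ S := by
    rcases hw₂ with h' | h'
    · rw [show k-1+1 = k by ring] at h'
      exact absurd h' hw₂k
    · rw [show k-1-1 = k-2 by ring] at h'
      exact h' ▸ hw₂S
  have hadj : G.Adj (b (k+2)) (b (k-2)) := (hB.2.2.1 _ _).mpr (Or.inl (zm22 k))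
  exact hS.1.2 _ h1 _ h2 hadj

end St10
namespace St10

variable {V : Type*} {G : SimpleGraph V}

lemma vd_unfold (A : Finset V) :
    VertexDecomposableOn G A ↔ (WellCoveredOn G A ∧
    ((∀ u ∈ A, ∀ v ∈ A, ¬ G.Adj u v) ∨
      ∃ x, ∃ _h : x ∈ A,
        VertexDecomposableOn G (A.erase x) ∧
        VertexDecomposableOn G (delClosedNbhd G A x))) := by
  rw [VertexDecomposableOn]

theorem master (hg : 5 ≤ G.egirth) :
    ∀ n (A : Finset V), A.card ≤ n → WellCoveredOn G A → PCI G A →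
      VertexDecomposableOn G A := by
  intro n
  induction n with
  | zero =>
    intro A hA hwc _
    have hAe : A = ∅ := Finset.card_eq_zero.mp (Nat.le_antisymm hA (Nat.zero_le _))
    subst hAe
    rw [vd_unfold]
    exact ⟨hwc, Or.inl (by simp)⟩
  | succ n ih =>
    intro A hA hwc hP
    rw [vd_unfold]
    refine ⟨hwc, ?_⟩
    by_cases hE : ∀ u ∈ A, ∀ v ∈ A, ¬ G.Adj u v
    · exact Or.inl hE
    right
    push_neg at hE
    obtain ⟨u₀, hu₀, v₀, hv₀, hadj⟩ := hE
    obtain ⟨hU, 𝒞, hF⟩ := id hP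
    have hcard_erase : ∀ w ∈ A, (A.erase w).card ≤ n := by
      intro w hw
      have := Finset.card_erase_of_mem hw
      have := Finset.card_pos.mpr ⟨w, hw⟩
      omega
    have hcard_del : ∀ w ∈ A, (delClosedNbhd G A w).card ≤ n := fun w hw =>
      le_trans (Finset.card_le_card del_subset_erase) (hcard_erase w hw)
    by_cases hiso : ∃ w ∈ A, dg G A w = 0
    · obtain ⟨w, hw, hw0⟩ := hiso
      have heq : delClosedNbhd G A w = A.erase w := del_eq_erase_of_isolated hw0
      have hpci : PCI G (delClosedNbhd G A w) := pci_del hg hP hw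
      have hwc' : WellCoveredOn G (delClosedNbhd G A w) := wc_del hwc hw
      have hvd : VertexDecomposableOn G (delClosedNbhd G A w) :=
        ih _ (hcard_del w hw) hwc' hpci
      exact ⟨w, hw, heq ▸ hvd, hvd⟩
    push_neg at hiso
    by_cases hpnd : ∃ p q, PE G A p q ∧ dg G A q = 1
    · obtain ⟨p, q, hPE, hdq⟩ := hpnd
      have hpA : p ∈ A := hPE.1
      have hok : EraseOK G A 𝒞 p := Or.inl ⟨q, hPE, hdq⟩
      refine ⟨p, hpA, ?_, ?_⟩
      · exact ih _ (hcard_erase p hpA) (wc_erase_supp hwc hPE hdq) (pci_erase hP hF hok)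
      · exact ih _ (hcard_del p hpA) (wc_del hwc hpA) (pci_del hg hP hpA)
    · push_neg at hpnd
      have hnp : ¬ Pnd G A u₀ := by
        rintro ⟨s, hPEs⟩
        rcases hPEs.2.2.2 with h | h
        · exact hpnd s u₀ hPEs.symm h
        · exact hpnd u₀ s hPEs h
      have hd0 : 0 < dg G A u₀ := Nat.pos_of_ne_zero (hiso u₀ hu₀)
      obtain ⟨b1, hb1, p0, hp0⟩ := (hF.2.2 u₀ hu₀).mpr ⟨hnp, hd0⟩
      have hB1 := hF.1 b1 hb1
      obtain ⟨k, hk1, hk4⟩ := cycle_choice hB1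
      have hxA : b1 k ∈ A := hB1.1 k
      have hok : EraseOK G A 𝒞 (b1 k) := Or.inr ⟨b1, hb1, k, rfl, hk1, hk4⟩
      refine ⟨b1 k, hxA, ?_, ?_⟩
      · exact ih _ (hcard_erase _ hxA) (wc_erase_cyc hwc hB1 hk1 hk4) (pci_erase hP hF hok)
      · exact ih _ (hcard_del _ hxA) (wc_del hwc hxA) (pci_del hg hP hxA)

end St10
namespace St10

variable {V : Type*} {G : SimpleGraph V} {𝒞 : Set (ZMod 5 → V)} {b : ZMod 5 → V}

lemma pc_to_fam [Fintype V] (h : InClassPC G) :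
    ∃ 𝒞 : Set (ZMod 5 → V), Fam G Finset.univ 𝒞 ∧
      (∀ v u₁ u₂, PE G Finset.univ v u₁ → PE G Finset.univ v u₂ → u₁ = u₂) := by
  obtain ⟨P, C, hPuC, hPCdisj, hPiff, huniq, 𝒞, hbasic, hCiff, hdisj⟩ := h
  have hPE_iff : ∀ v u₁ : V, PE G Finset.univ v u₁ ↔
      (G.Adj v u₁ ∧ (degIn G v = 1 ∨ degIn G u₁ = 1)) := by
    intro v u₁
    constructor
    · rintro ⟨_, _, h1, h2⟩
      exact ⟨h1, h2⟩
    · rintro ⟨h1, h2⟩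
      exact ⟨Finset.mem_univ _, Finset.mem_univ _, h1, h2⟩
  have hBas : ∀ b ∈ 𝒞, BasicOn G Finset.univ b := by
    intro b hb
    obtain ⟨hinj, hiff, hdeg⟩ := hbasic b hb
    exact ⟨fun j => Finset.mem_univ _, hinj, hiff, hdeg⟩
  refine ⟨𝒞, ⟨hBas, hdisj, ?_⟩, ?_⟩
  · intro v _
    constructor
    · rintro ⟨b', hb', j, hj⟩
      constructor
      · rintro ⟨u, hPE⟩
        have hvP : v ∈ P := (hPiff v).mpr ⟨u, ((hPE_iff v u).mp hPE)⟩
        have hvC : v ∈ C := (hCiff v).mpr ⟨b', hb', j, hj⟩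
        exact hPCdisj v ⟨hvP, hvC⟩
      · have := (hBas b' hb').dg_two_le j
        rw [hj] at this
        omega
    · rintro ⟨hnp, _⟩
      have hvP : v ∉ P := by
        intro hvP
        obtain ⟨u, hu1, hu2⟩ := (hPiff v).mp hvP
        exact hnp ⟨u, (hPE_iff v u).mpr ⟨hu1, hu2⟩⟩
      have hvC : v ∈ C := (hPuC v).resolve_left hvP
      exact (hCiff v).mp hvC
  · intro v u₁ u₂ h1 h2
    have hvP : v ∈ P := (hPiff v).mpr ⟨u₁, (hPE_iff v u₁).mp h1⟩
    obtain ⟨u, _, hun⟩ := huniq v hvP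
    rw [hun u₁ ((hPE_iff v u₁).mp h1), hun u₂ ((hPE_iff v u₂).mp h2)]

lemma to_family [Fintype V] (hF : Fam G Finset.univ 𝒞)
    (hb : BasicOn G Finset.univ b) (i : ZMod 5)
    (h1 : dg G Finset.univ (b (i+1)) = 2) (h2 : dg G Finset.univ (b (i-1)) = 2) :
    ∃ b' ∈ 𝒞, ∃ k, b' k = b i ∧ dg G Finset.univ (b' (k+1)) = 2 ∧
      dg G Finset.univ (b' (k-1)) = 2 := by
  have hpairb : nb G Finset.univ (b (i+1)) = {b (i+2), b i} := by
    have := hb.nb_eq_pair h1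
    rwa [show i+1+1 = i+2 by ring, show i+1-1 = i by ring] at this
  have hpairb4 : nb G Finset.univ (b (i-1)) = {b i, b (i-2)} := by
    have := hb.nb_eq_pair h2
    rwa [show i-1+1 = i by ring, show i-1-1 = i-2 by ring] at this
  have hnpw : ¬ Pnd G Finset.univ (b (i+1)) := by
    rintro ⟨s, hPE⟩
    have hds : dg G Finset.univ s = 1 := by
      rcases hPE.2.2.2 with h' | h'
      · omega
      · exact h'
    have hs : s ∈ nb G Finset.univ (b (i+1)) := mem_nb_of hPE.2.1 hPE.2.2.1
    rw [hpairb] at hs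
    have d1 := hb.dg_two_le (i+2)
    have d2 := hb.dg_two_le i
    rcases Finset.mem_insert.mp hs with h' | h'
    · rw [h'] at hds; omega
    · rw [Finset.mem_singleton.mp h'] at hds; omega
  have hnpw4 : ¬ Pnd G Finset.univ (b (i-1)) := by
    rintro ⟨s, hPE⟩
    have hds : dg G Finset.univ s = 1 := by
      rcases hPE.2.2.2 with h' | h'
      · omega
      · exact h'
    have hs : s ∈ nb G Finset.univ (b (i-1)) := mem_nb_of hPE.2.1 hPE.2.2.1
    rw [hpairb4] at hs
    have d1 := hb.dg_two_le (i-2)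
    have d2 := hb.dg_two_le i
    rcases Finset.mem_insert.mp hs with h' | h'
    · rw [h'] at hds; omega
    · rw [Finset.mem_singleton.mp h'] at hds; omega
  obtain ⟨b', hb', m, hm⟩ := (hF.2.2 _ (Finset.mem_univ _)).mpr ⟨hnpw, by omega⟩
  obtain ⟨b'', hb'', t, ht⟩ := (hF.2.2 _ (Finset.mem_univ _)).mpr ⟨hnpw4, by omega⟩
  have hB' := hF.1 b' hb'
  have hB'' := hF.1 b'' hb''
  have hd2m : dg G Finset.univ (b' m) = 2 := by rw [hm]; exact h1
  have hd2t : dg G Finset.univ (b'' t) = 2 := by rw [ht]; exact h2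
  have hpp : ({b' (m+1), b' (m-1)} : Finset V) = {b (i+2), b i} := by
    rw [← hB'.nb_eq_pair hd2m, hm, hpairb]
  have hpp4 : ({b'' (t+1), b'' (t-1)} : Finset V) = {b i, b (i-2)} := by
    rw [← hB''.nb_eq_pair hd2t, ht, hpairb4]
  have hbi' : b i ∈ ({b' (m+1), b' (m-1)} : Finset V) := by
    rw [hpp]
    exact Finset.mem_insert_of_mem (Finset.mem_singleton_self _)
  have hbi'' : b i ∈ Set.range b'' := by
    have : b i ∈ ({b'' (t+1), b'' (t-1)} : Finset V) := by
      rw [hpp4]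
      exact Finset.mem_insert_self _ _
    rcases Finset.mem_insert.mp this with h' | h'
    · exact ⟨t+1, h'.symm⟩
    · exact ⟨t-1, (Finset.mem_singleton.mp h').symm⟩
  have hbirange' : b i ∈ Set.range b' := by
    rcases Finset.mem_insert.mp hbi' with h' | h'
    · exact ⟨m+1, h'.symm⟩
    · exact ⟨m-1, (Finset.mem_singleton.mp h').symm⟩
  have hbeq : b'' = b' := hF.cyc_eq_of_mem hb'' hb' hbi'' hbirange'
  subst hbeq
  -- b (i-1) = b'' t lies on the same cycle
  have htm : t ≠ m := by
    intro h
    rw [h] at ht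
    exact hb.nbne (zm5ne₁ i) (hm.symm.trans ht)
  rcases Finset.mem_insert.mp hbi' with h' | h'
  · -- b i = b'' (m+1)
    have hadj : G.Adj (b'' t) (b'' (m+1)) := by
      rw [ht, ← h']
      exact (hb.adj_pred i).symm
    have hts : t = m + 2 := by
      rcases (hB''.2.2.1 t (m+1)).mp hadj with hc | hc
      · exact absurd (zmB m t hc).symm htm
      · rw [hc]; ring
    refine ⟨b'', hb'', m+1, h'.symm, ?_, ?_⟩
    · rw [show m+1+1 = m+2 by ring, ← hts, ht]
      exact h2
    · rw [show m+1-1 = m by ring]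
      exact hd2m
  · -- b i = b'' (m-1)
    have h'' := Finset.mem_singleton.mp h'
    have hadj : G.Adj (b'' t) (b'' (m-1)) := by
      rw [ht, ← h'']
      exact (hb.adj_pred i).symm
    have hts : t = m - 2 := by
      rcases (hB''.2.2.1 t (m-1)).mp hadj with hc | hc
      · have h5 : ∀ a c : ZMod 5, a - 1 = c + 1 → c = a - 2 := by decide
        exact h5 m t hc
      · exfalso
        refine htm ?_
        rw [hc]; ring
    refine ⟨b'', hb'', m-1, h''.symm, ?_, ?_⟩
    · rw [show m-1+1 = m by ring]
      exact hd2m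
    · rw [show m-1-1 = m-2 by ring, ← hts, ht]
      exact h2

end St10
/-- Let `G` be a well-covered graph of girth at least five in the class `PC`,
and let `b` be a basic 5-cycle of `G`. If the vertex `b i` is adjacent in the cycle to two
vertices of the cycle that have degree two in `G`, then `b i` is a shedding vertex of `G`. -/
theorem statement10 {V : Type*} [Fintype V] (G : SimpleGraph V)
    (hwc : WellCovered G) (hgirth : 5 ≤ G.egirth) (hPC : InClassPC G)
    (b : ZMod 5 → V) (hb : IsBasicFiveCycle G b) (i : ZMod 5)
    (h1 : degIn G (b (i + 1)) = 2) (h2 : degIn G (b (i - 1)) = 2) :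
    b i ∈ Shed G := by
  classical
  obtain ⟨𝒞, hF, hU⟩ := St10.pc_to_fam hPC
  have hP : St10.PCI G Finset.univ := ⟨hU, 𝒞, hF⟩
  have hBu : St10.BasicOn G Finset.univ b := ⟨fun j => Finset.mem_univ _, hb.1, hb.2.1, hb.2.2⟩
  obtain ⟨b', hb', k, hk, hk1, hk4⟩ := St10.to_family hF hBu i h1 h2
  have hok : St10.EraseOK G Finset.univ 𝒞 (b' k) := Or.inr ⟨b', hb', k, rfl, hk1, hk4⟩
  have hwcu : WellCoveredOn G Finset.univ := hwc
  rw [← hk]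
  refine ⟨?_, ?_⟩
  · exact St10.master hgirth _ _ le_rfl (St10.wc_erase_cyc hwcu (hF.1 b' hb') hk1 hk4)
      (St10.pci_erase hP hF hok)
  · exact St10.master hgirth _ _ le_rfl (St10.wc_del hwcu (Finset.mem_univ _))
      (St10.pci_del hgirth hP (Finset.mem_univ _))
end

section
/- Fix integers m ≥ 1 and k_1, ..., k_m with each k_i ≥ 2, and set n = k_1 + ... + k_m. Then the graph D_n(k_1, ..., k_m) is well-covered; moreover every maximal independent set of D_n(k_1, ..., k_m) has cardinality 2n. -/
open scoped Classical

variable {V : Type*}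

/-- The (0-indexed) vertices `a` and `b` of `X` lie in the same complete bipartite block
`K_{k i, k i}`: block `i` occupies the indices in `[2 * (k 0 + ⋯ + k (i-1)), 2 * (k 0 + ⋯ + k i))`. -/
def SameBlock (m : ℕ) (k : ℕ → ℕ) (a b : ℕ) : Prop :=
  ∃ i < m, 2 * (∑ j ∈ Finset.range i, k j) ≤ a ∧ a < 2 * (∑ j ∈ Finset.range (i + 1), k j) ∧
           2 * (∑ j ∈ Finset.range i, k j) ≤ b ∧ b < 2 * (∑ j ∈ Finset.range (i + 1), k j)

/-- The graph `D_n(k 0, …, k (m-1))` on the `5n` vertices `X ⊕ Y ⊕ Z` (all 0-indexed, so the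
paper's `x_j` is `Sum.inl (j-1)`, `y_j` is `Sum.inr (Sum.inl (j-1))` and `z_j` is
`Sum.inr (Sum.inr (j-1))`).  Its edges are exactly: `Z` induces a complete graph `K n`;
`Y` is independent; `X` induces the disjoint union `K_{k 0,k 0} ⊔ ⋯ ⊔ K_{k (m-1),k (m-1)}`,
where within each block the bipartition is by the parity of the index; `x_j` is adjacent to
`y_j`; and `z_c` is adjacent to `y_{2c}` and `y_{2c+1}`. -/
def Dgraph (m : ℕ) (k : ℕ → ℕ) (n : ℕ) :
    SimpleGraph (Fin (2 * n) ⊕ Fin (2 * n) ⊕ Fin n) :=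
  SimpleGraph.fromRel fun p q =>
    match p, q with
    | Sum.inl a, Sum.inl b => SameBlock m k a.val b.val ∧ a.val % 2 ≠ b.val % 2
    | Sum.inl a, Sum.inr (Sum.inl b) => a.val = b.val
    | Sum.inr (Sum.inr c), Sum.inr (Sum.inl b) => b.val = 2 * c.val ∨ b.val = 2 * c.val + 1
    | Sum.inr (Sum.inr c), Sum.inr (Sum.inr d) => c ≠ d
    | _, _ => False

/-!
The vertices `x_{2c}, x_{2c+1}, y_{2c+1}, z_c, y_{2c}` (with `x_{2c} ~ x_{2c+1}` because they lie in
the same block) form a 5-cycle, and these `n` gadgets partition the vertex set. A maximal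
independent set `S` meets each of them in exactly two vertices: in at most two since a 5-cycle has
no larger independent set, and in at least two since `S` dominates `y_{2c}` and `y_{2c+1}`, and,
when `z_c ∈ S`, also `x_{2c}` or `x_{2c+1}`: otherwise their neighbours in `S` would be vertices of
`X` of opposite parities in one block, hence adjacent. Hence `|S| = 2n`.
-/

namespace Fin

def twoMul {n : ℕ} (c : Fin n) : Fin (2 * n) := ⟨2 * c, by omega⟩

def twoMulAddOne {n : ℕ} (c : Fin n) : Fin (2 * n) := ⟨2 * c + 1, by omega⟩

theorem sum_univ_two_mul {M : Type*} [AddCommMonoid M] {n : ℕ} (f : Fin (2 * n) → M) :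
    ∑ j, f j = ∑ c : Fin n, (f c.twoMul + f c.twoMulAddOne) := by
  rw [← (finProdFinEquiv.trans (finCongr (mul_comm n 2))).sum_comp, Fintype.sum_prod_type]
  refine Finset.sum_congr rfl fun c _ => ?_
  rw [Fin.sum_univ_two]
  congr 2 <;> ext <;> simp [twoMul, twoMulAddOne]; ring

end Fin

theorem IsMaxIndepIn.exists_adj {G : SimpleGraph V} {A S : Finset V} (hS : IsMaxIndepIn G A S)
    {v : V} (hvA : v ∈ A) (hvS : v ∉ S) : ∃ u ∈ S, G.Adj u v := by
  by_contra! hv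
  have hindep : IsIndepIn G A (insert v S) := by
    refine ⟨Finset.insert_subset hvA hS.1.1, ?_⟩
    simp only [Finset.mem_insert]
    rintro a (rfl | ha) b (rfl | hb)
    · exact G.loopless.irrefl _
    · exact fun h => hv b hb h.symm
    · exact hv a ha
    · exact hS.1.2 a ha b hb
  exact hvS (hS.2 _ hindep (Finset.subset_insert v S) ▸ Finset.mem_insert_self v S)

theorem ite_sum_eq_two_of_pentagon {x₀ x₁ y₀ y₁ z : Prop} [Decidable x₀] [Decidable x₁]
    [Decidable y₀] [Decidable y₁] [Decidable z]
    (hx : ¬ (x₀ ∧ x₁)) (hxy₀ : ¬ (x₀ ∧ y₀)) (hxy₁ : ¬ (x₁ ∧ y₁)) (hzy₀ : ¬ (z ∧ y₀))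
    (hzy₁ : ¬ (z ∧ y₁)) (hy₀ : x₀ ∨ y₀ ∨ z) (hy₁ : x₁ ∨ y₁ ∨ z) (hz : z → x₀ ∨ x₁) :
    ((if x₀ then 1 else 0) + (if x₁ then 1 else 0) + ((if y₀ then 1 else 0) +
      (if y₁ then 1 else 0) + (if z then 1 else 0)) : ℕ) = 2 := by
  by_cases x₀ <;> by_cases x₁ <;> by_cases y₀ <;> by_cases y₁ <;> by_cases z <;> simp_all

namespace SameBlock

variable {m : ℕ} {k : ℕ → ℕ}

theorem symm {a b : ℕ} (h : SameBlock m k a b) : SameBlock m k b a := by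
  obtain ⟨i, hi, ha, ha', hb, hb'⟩ := h
  exact ⟨i, hi, hb, hb', ha, ha'⟩

theorem trans {a b c : ℕ} (hab : SameBlock m k a b) (hbc : SameBlock m k b c) :
    SameBlock m k a c := by
  obtain ⟨i, hi, ha, ha', hb, hb'⟩ := hab
  obtain ⟨i', -, hb₂, hb₂', hc, hc'⟩ := hbc
  have partial_sum_mono : ∀ {p q}, p < q →
      ∑ j ∈ Finset.range (p + 1), k j ≤ ∑ j ∈ Finset.range q, k j := fun h =>
    Finset.sum_le_sum_of_subset (Finset.range_subset_range.mpr h)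
  obtain rfl : i = i' := by
    rcases Nat.lt_trichotomy i i' with h | h | h
    · have := partial_sum_mono h; omega
    · exact h
    · have := partial_sum_mono h; omega
  exact ⟨i, hi, ha, ha', hc, hc'⟩

theorem two_mul_two_mul_add_one {c : ℕ} (hc : c < ∑ i ∈ Finset.range m, k i) :
    SameBlock m k (2 * c) (2 * c + 1) := by
  induction m with
  | zero => simp at hc
  | succ m ih =>
    by_cases h : c < ∑ i ∈ Finset.range m, k i
    · obtain ⟨i, hi, h⟩ := ih h
      exact ⟨i, by omega, h⟩
    · rw [Finset.sum_range_succ] at hc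
      exact ⟨m, by omega, by omega, by rw [Finset.sum_range_succ]; omega, by omega,
        by rw [Finset.sum_range_succ]; omega⟩

end SameBlock

namespace Dgraph

variable {m n : ℕ} {k : ℕ → ℕ}

theorem adj_inl_inl_iff {a b : Fin (2 * n)} :
    (Dgraph m k n).Adj (.inl a) (.inl b) ↔ SameBlock m k a b ∧ a.val % 2 ≠ b.val % 2 := by
  simp only [Dgraph, SimpleGraph.fromRel_adj]
  constructor
  · rintro ⟨-, h | ⟨h, hp⟩⟩
    exacts [h, ⟨h.symm, Ne.symm hp⟩]
  · rintro ⟨h, hp⟩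
    exact ⟨fun e => hp (by cases e; rfl), Or.inl ⟨h, hp⟩⟩

theorem adj_inl_inr_inl_iff {a b : Fin (2 * n)} :
    (Dgraph m k n).Adj (.inl a) (.inr (.inl b)) ↔ a = b := by
  simp [Dgraph, Fin.ext_iff]

theorem adj_inr_inr_inr_inl_iff {c : Fin n} {b : Fin (2 * n)} :
    (Dgraph m k n).Adj (.inr (.inr c)) (.inr (.inl b)) ↔ b = c.twoMul ∨ b = c.twoMulAddOne := by
  simp [Dgraph, Fin.ext_iff, Fin.twoMul, Fin.twoMulAddOne]

theorem not_adj_inr_inl_inr_inl {a b : Fin (2 * n)} :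
    ¬ (Dgraph m k n).Adj (.inr (.inl a)) (.inr (.inl b)) := by
  simp [Dgraph]

theorem not_adj_inr_inr_inl {c : Fin n} {a : Fin (2 * n)} :
    ¬ (Dgraph m k n).Adj (.inr (.inr c)) (.inl a) := by
  simp [Dgraph]

theorem eq_of_adj_inr_inl {u : Fin (2 * n) ⊕ Fin (2 * n) ⊕ Fin n} {j : Fin (2 * n)}
    (h : (Dgraph m k n).Adj u (.inr (.inl j))) :
    u = .inl j ∨ ∃ c : Fin n, u = .inr (.inr c) ∧ (j = c.twoMul ∨ j = c.twoMulAddOne) := by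
  rcases u with a | a | c
  · exact .inl (congrArg _ (adj_inl_inr_inl_iff.mp h))
  · exact (not_adj_inr_inl_inr_inl h).elim
  · exact .inr ⟨c, rfl, adj_inr_inr_inr_inl_iff.mp h⟩

theorem eq_of_adj_inl {u : Fin (2 * n) ⊕ Fin (2 * n) ⊕ Fin n} {j : Fin (2 * n)}
    (h : (Dgraph m k n).Adj u (.inl j)) :
    u = .inr (.inl j) ∨ ∃ a, u = .inl a ∧ (Dgraph m k n).Adj (.inl a) (.inl j) := by
  rcases u with a | a | c
  · exact .inr ⟨a, rfl, h⟩
  · exact .inl (by rw [adj_inl_inr_inl_iff.mp h.symm])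
  · exact (not_adj_inr_inr_inl h).elim

variable {S : Finset (Fin (2 * n) ⊕ Fin (2 * n) ⊕ Fin n)}

theorem mem_inl_or_mem_inr_inl_or_mem_inr_inr (hS : IsMaxIndepIn (Dgraph m k n) Finset.univ S)
    (c : Fin n) {j : Fin (2 * n)} (hj : j = c.twoMul ∨ j = c.twoMulAddOne) :
    .inl j ∈ S ∨ .inr (.inl j) ∈ S ∨ .inr (.inr c) ∈ S := by
  by_contra! h
  obtain ⟨u, hu, hadj⟩ := hS.exists_adj (Finset.mem_univ _) h.2.1
  rcases eq_of_adj_inr_inl hadj with rfl | ⟨d, rfl, hd⟩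
  · exact h.1 hu
  · obtain rfl : d = c := by
      ext
      simp only [Fin.ext_iff, Fin.twoMul, Fin.twoMulAddOne] at hj hd
      omega
    exact h.2.2 hu

theorem mem_inl_of_mem_inr_inr (hn : n = ∑ i ∈ Finset.range m, k i)
    (hS : IsMaxIndepIn (Dgraph m k n) Finset.univ S) {c : Fin n} (hz : .inr (.inr c) ∈ S) :
    .inl c.twoMul ∈ S ∨ .inl c.twoMulAddOne ∈ S := by
  by_contra! hx
  have hy : ∀ j, (j = c.twoMul ∨ j = c.twoMulAddOne) → .inr (.inl j) ∉ S := fun j hj hy =>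
    hS.1.2 _ hz _ hy (adj_inr_inr_inr_inl_iff.mpr hj)
  obtain ⟨u, hu, hu_adj⟩ := hS.exists_adj (Finset.mem_univ _) hx.1
  obtain ⟨v, hv, hv_adj⟩ := hS.exists_adj (Finset.mem_univ _) hx.2
  rcases eq_of_adj_inl hu_adj with rfl | ⟨a, rfl, ha⟩
  · exact hy _ (.inl rfl) hu
  rcases eq_of_adj_inl hv_adj with rfl | ⟨b, rfl, hb⟩
  · exact hy _ (.inr rfl) hv
  rw [adj_inl_inl_iff] at ha hb
  have hblock : SameBlock m k (2 * c) (2 * c + 1) :=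
    SameBlock.two_mul_two_mul_add_one (hn ▸ c.isLt)
  refine hS.1.2 _ hu _ hv (adj_inl_inl_iff.mpr ⟨ha.1.trans (hblock.trans hb.1.symm), ?_⟩)
  simp only [Fin.twoMul, Fin.twoMulAddOne] at ha hb
  omega

theorem sum_ite_mem_pentagon_eq_two (hn : n = ∑ i ∈ Finset.range m, k i)
    (hS : IsMaxIndepIn (Dgraph m k n) Finset.univ S) (c : Fin n) :
    ((if .inl c.twoMul ∈ S then 1 else 0) + (if .inl c.twoMulAddOne ∈ S then 1 else 0) +
      ((if .inr (.inl c.twoMul) ∈ S then 1 else 0) +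
        (if .inr (.inl c.twoMulAddOne) ∈ S then 1 else 0) +
        (if .inr (.inr c) ∈ S then 1 else 0)) : ℕ) = 2 := by
  have hindep {u v} (hu : u ∈ S) (hv : v ∈ S) : ¬ (Dgraph m k n).Adj u v := hS.1.2 u hu v hv
  apply ite_sum_eq_two_of_pentagon
  · rintro ⟨h₀, h₁⟩
    refine hindep h₀ h₁ (adj_inl_inl_iff.mpr ⟨?_, by simp [Fin.twoMul, Fin.twoMulAddOne]⟩)
    exact SameBlock.two_mul_two_mul_add_one (hn ▸ c.isLt)
  · exact fun h => hindep h.1 h.2 (adj_inl_inr_inl_iff.mpr rfl)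
  · exact fun h => hindep h.1 h.2 (adj_inl_inr_inl_iff.mpr rfl)
  · exact fun h => hindep h.1 h.2 (adj_inr_inr_inr_inl_iff.mpr (.inl rfl))
  · exact fun h => hindep h.1 h.2 (adj_inr_inr_inr_inl_iff.mpr (.inr rfl))
  · exact mem_inl_or_mem_inr_inl_or_mem_inr_inr hS c (.inl rfl)
  · exact mem_inl_or_mem_inr_inl_or_mem_inr_inr hS c (.inr rfl)
  · exact mem_inl_of_mem_inr_inr hn hS

theorem card_eq_of_isMaxIndepIn (hn : n = ∑ i ∈ Finset.range m, k i)
    (hS : IsMaxIndepIn (Dgraph m k n) Finset.univ S) : S.card = 2 * n := by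
  calc S.card = ∑ v, if v ∈ S then 1 else 0 := by simp
    _ = ∑ _c : Fin n, 2 := by
      rw [Fintype.sum_sum_type, Fintype.sum_sum_type, Fin.sum_univ_two_mul,
        Fin.sum_univ_two_mul, ← Finset.sum_add_distrib, ← Finset.sum_add_distrib]
      exact Finset.sum_congr rfl fun c _ => sum_ite_mem_pentagon_eq_two hn hS c
    _ = 2 * n := by simp [mul_comm]

end Dgraph

theorem statement12_general (m : ℕ) (k : ℕ → ℕ)
    (n : ℕ) (hn : n = ∑ i ∈ Finset.range m, k i) :
    WellCovered (Dgraph m k n) ∧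
    ∀ S, IsMaxIndepIn (Dgraph m k n) Finset.univ S → S.card = 2 * n := by
  have hcard : ∀ S, IsMaxIndepIn (Dgraph m k n) Finset.univ S → S.card = 2 * n :=
    fun _ hS => Dgraph.card_eq_of_isMaxIndepIn hn hS
  exact ⟨fun S T hS hT => (hcard S hS).trans (hcard T hT).symm, hcard⟩

/-- The graph `D_n(k_1, …, k_m)` is well-covered, and every maximal
independent set has cardinality `2n`. -/
theorem statement12 (m : ℕ) (hm : 1 ≤ m) (k : ℕ → ℕ) (hk : ∀ i < m, 2 ≤ k i)
    (n : ℕ) (hn : n = ∑ i ∈ Finset.range m, k i) :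
    WellCovered (Dgraph m k n) ∧
    ∀ S, IsMaxIndepIn (Dgraph m k n) Finset.univ S → S.card = 2 * n :=
  statement12_general m k n hn
end
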